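/- arXiv:2412.11901 — 10 statements merged into one kernel-verified Lean document; each statement's English description precedes it below -/
import Mathlib

section
/- Let n ≥ d+1 ≥ 2 and let F be a family of (d+1)-element subsets of {1,...,n} with VC-dimension at most d. Then |F| ≤ C(n, d). -/
private lemma sum_pow_neg_one_q {α : Type*} [DecidableEq α] (s : Finset α) :
    ∑ m ∈ s.powerset, ((-1:ℚ))^m.card = if s = ∅ then (1:ℚ) else 0 := by
  have h := Finset.sum_powerset_neg_one_pow_card (x := s)
  calc ∑ m ∈ s.powerset, ((-1:ℚ))^m.card
      = ((∑ m ∈ s.powerset, (-1:ℤ)^m.card : ℤ) : ℚ) := by push_cast; rfl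
    _ = _ := by rw [h]; split_ifs <;> simp

theorem stmt_2 (n d : ℕ) (hd : 1 ≤ d) (hn : d + 1 ≤ n)
    (𝒜 : Finset (Finset (Fin n)))
    (hunif : ∀ F ∈ 𝒜, F.card = d + 1)
    (hVC : ∀ S : Finset (Fin n), S.card = d + 1 → ∃ B ⊆ S, ∀ F ∈ 𝒜, F ∩ S ≠ B) :
    𝒜.card ≤ n.choose d := by
  classical
  set ι := {x // x ∈ 𝒜}
  set κ := {D : Finset (Fin n) // D.card = d}
  set v : ι → (κ → ℚ) := fun A D => if D.1 ⊆ A.1 then (1:ℚ) else 0 with hv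
  have hli : LinearIndependent ℚ v := by
    rw [Fintype.linearIndependent_iff]
    intro g hg i₀
    -- Step 1: for every S with |S| ≤ d, the sum of g over members containing S is 0
    have key : ∀ m : ℕ, ∀ S : Finset (Fin n), S.card + m = d →
        ∑ i : ι, (if S ⊆ i.1 then g i else 0) = 0 := by
      intro m
      induction m with
      | zero =>
        intro S hS
        have h0 := congrFun hg ⟨S, by simpa using hS⟩
        rw [Finset.sum_apply] at h0
        simpa [hv, mul_ite, mul_one, mul_zero] using h0
      | succ m ih =>
        intro S hS
        have hsum : ∑ x ∈ Finset.univ \ S,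
            (∑ i : ι, (if insert x S ⊆ i.1 then g i else 0)) = 0 := by
          apply Finset.sum_eq_zero
          intro x hx
          have hxS : x ∉ S := by simpa using hx
          exact ih (insert x S) (by rw [Finset.card_insert_of_notMem hxS]; omega)
        rw [Finset.sum_comm] at hsum
        have hterm : ∀ i : ι,
            (∑ x ∈ Finset.univ \ S, (if insert x S ⊆ i.1 then g i else 0)) =
            ((m : ℚ) + 2) * (if S ⊆ i.1 then g i else 0) := by
          intro i
          by_cases hSi : S ⊆ i.1
          · have hc : ∀ x ∈ Finset.univ \ S, (if insert x S ⊆ i.1 then g i else 0) =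
                (if x ∈ i.1 then g i else 0) := by
              intro x hx
              congr 1
              simp [Finset.insert_subset_iff, hSi]
            rw [Finset.sum_congr rfl hc, if_pos hSi, ← Finset.sum_filter]
            have hfil : (Finset.univ \ S).filter (· ∈ i.1) = i.1 \ S := by
              ext y; simp [and_comm]
            rw [hfil, Finset.sum_const]
            have hcard : (i.1 \ S).card = m + 2 := by
              rw [Finset.card_sdiff_of_subset hSi, hunif i.1 i.2]
              omega
            rw [hcard]
            push_cast
            ring
          · rw [if_neg hSi, mul_zero]
            apply Finset.sum_eq_zero
            intro x hx
            rw [if_neg]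
            intro hins
            exact hSi (fun y hy => hins (Finset.mem_insert_of_mem hy))
        rw [Finset.sum_congr rfl (fun i _ => hterm i), ← Finset.mul_sum] at hsum
        have hne : ((m : ℚ) + 2) ≠ 0 := by positivity
        exact (mul_eq_zero.mp hsum).resolve_left hne
    -- Step 2
    set A₀ := i₀.1 with hA₀
    have hcA₀ : A₀.card = d + 1 := hunif A₀ i₀.2
    obtain ⟨B, hBsub, hB⟩ := hVC A₀ hcA₀
    set S₀ := A₀ \ B with hS₀
    -- The inclusion-exclusion sum is zero since no F ∈ 𝒜 satisfies F ∩ A₀ = B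
    have hsum : ∑ C ∈ S₀.powerset,
        ((-1:ℚ))^C.card * (∑ i : ι, (if B ∪ C ⊆ i.1 then g i else 0)) = 0 := by
      have hpush : ∀ C ∈ S₀.powerset,
          ((-1:ℚ))^C.card * (∑ i : ι, (if B ∪ C ⊆ i.1 then g i else 0)) =
          ∑ i : ι, ((-1:ℚ))^C.card * (if B ∪ C ⊆ i.1 then g i else 0) :=
        fun C _ => Finset.mul_sum _ _ _
      rw [Finset.sum_congr rfl hpush, Finset.sum_comm]
      apply Finset.sum_eq_zero
      intro i _
      have hiA : i.1 ∩ A₀ ≠ B := hB i.1 i.2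
      by_cases hBi : B ⊆ i.1
      · have hc : ∀ C ∈ S₀.powerset, ((-1:ℚ))^C.card * (if B ∪ C ⊆ i.1 then g i else 0) =
            (if C ∈ (S₀ ∩ i.1).powerset then ((-1:ℚ))^C.card * g i else 0) := by
          intro C hC
          have hCS : C ⊆ S₀ := Finset.mem_powerset.mp hC
          by_cases hCi : C ⊆ i.1
          · rw [if_pos (Finset.union_subset hBi hCi),
              if_pos (Finset.mem_powerset.mpr (Finset.subset_inter hCS hCi))]
          · rw [if_neg (by simp [Finset.union_subset_iff, hCi]),
              if_neg (fun h => hCi ((Finset.mem_powerset.mp h).trans Finset.inter_subset_right)),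
              mul_zero]
        rw [Finset.sum_congr rfl hc, Finset.sum_ite_mem]
        have hint : S₀.powerset ∩ (S₀ ∩ i.1).powerset = (S₀ ∩ i.1).powerset :=
          Finset.inter_eq_right.mpr (Finset.powerset_mono.mpr Finset.inter_subset_left)
        rw [hint, ← Finset.sum_mul]
        have hTne : S₀ ∩ i.1 ≠ ∅ := by
          intro hemp
          apply hiA
          apply Finset.Subset.antisymm
          · intro x hx
            rcases Finset.mem_inter.mp hx with ⟨hxi, hxA⟩
            by_contra hxB
            have : x ∈ S₀ ∩ i.1 := Finset.mem_inter.mpr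
              ⟨Finset.mem_sdiff.mpr ⟨hxA, hxB⟩, hxi⟩
            simp [hemp] at this
          · exact Finset.subset_inter hBi hBsub
        rw [sum_pow_neg_one_q, if_neg hTne, zero_mul]
      · apply Finset.sum_eq_zero
        intro C hC
        rw [if_neg (by simp [Finset.union_subset_iff, hBi]), mul_zero]
    -- All terms with C ⊊ S₀ vanish by `key`, leaving only C = S₀
    have hBcard : B.card + S₀.card = d + 1 := by
      rw [hS₀, Finset.card_sdiff_of_subset hBsub, hcA₀]
      have := Finset.card_le_card hBsub
      omega
    have hsingle : ∑ C ∈ S₀.powerset,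
        ((-1:ℚ))^C.card * (∑ i : ι, (if B ∪ C ⊆ i.1 then g i else 0)) =
        ((-1:ℚ))^S₀.card * (∑ i : ι, (if B ∪ S₀ ⊆ i.1 then g i else 0)) := by
      apply Finset.sum_eq_single_of_mem S₀ (Finset.mem_powerset_self S₀)
      intro C hC hCne
      have hCS : C ⊆ S₀ := Finset.mem_powerset.mp hC
      have hClt : C.card < S₀.card := Finset.card_lt_card (lt_of_le_of_ne hCS hCne)
      have hdisj : Disjoint B C := by
        apply Finset.disjoint_left.mpr
        intro x hxB hxC
        exact (Finset.mem_sdiff.mp (hCS hxC)).2 hxB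
      have hBC : (B ∪ C).card + (d - (B ∪ C).card) = d := by
        rw [Finset.card_union_of_disjoint hdisj]
        omega
      rw [key (d - (B ∪ C).card) (B ∪ C) hBC, mul_zero]
    rw [hsingle] at hsum
    have hBS : B ∪ S₀ = A₀ := Finset.union_sdiff_of_subset hBsub
    have hlast : ∑ i : ι, (if B ∪ S₀ ⊆ i.1 then g i else 0) = g i₀ := by
      rw [hBS]
      rw [Finset.sum_eq_single_of_mem i₀ (Finset.mem_univ i₀)]
      · exact if_pos Finset.Subset.rfl
      · intro i _ hne
        rw [if_neg]
        intro hsub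
        apply hne
        have : A₀ = i.1 := Finset.eq_of_subset_of_card_le hsub
          (by rw [hunif i.1 i.2, hcA₀])
        exact Subtype.ext this.symm
    rw [hlast] at hsum
    have hpow : ((-1:ℚ))^S₀.card ≠ 0 := by
      apply pow_ne_zero; norm_num
    exact (mul_eq_zero.mp hsum).resolve_left hpow
  have hcard := hli.fintype_card_le_finrank
  rw [Module.finrank_pi] at hcard
  rwa [Fintype.card_coe, Fintype.card_finset_len, Fintype.card_fin] at hcard
end

section
/- Let F be a family of (d+1)-element subsets of {1,...,n} with VC-dimension at most d. Then |F| ≤ |∂_d F|, where ∂_d F is the d-shadow of F. -/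
/-!
Suppose the vectors `(𝟙[T ⊆ F])_{T ∈ ∂𝒜}`, `F ∈ 𝒜`, satisfy a linear relation with coefficients
`f`. Then the up-sums `σ S = ∑_{F ∈ 𝒜, S ⊆ F} f F` vanish on `d`-sets, and the double count
`∑_{a ∉ S} σ (S + a) = (d + 1 - |S|) σ S` propagates this down to all sets of size at most `d`.
For `F ∈ 𝒜` and a trace `B ⊆ F` that `𝒜` misses, inclusion-exclusion gives
`∑_{B ⊆ S ⊆ F} (-1)^|S \ B| σ S = ∑_{G ∈ 𝒜, F ∩ G = B} f G = 0`, and the only term on the left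
that survives is `±σ F = ±f F`. Hence the vectors are independent and `|𝒜| ≤ |∂𝒜|`.
-/

open Finset
open scoped FinsetFamily

section UpperSum

variable {α R : Type*} [DecidableEq α] {𝒜 : Finset (Finset α)} {k : ℕ}

def upperSum [AddCommMonoid R] (𝒜 : Finset (Finset α)) (f : Finset α → R) (s : Finset α) : R :=
  ∑ t ∈ 𝒜 with s ⊆ t, f t

lemma upperSum_eq_of_mem [AddCommMonoid R] (h𝒜 : (𝒜 : Set (Finset α)).Sized k)
    (f : Finset α → R) {s : Finset α} (hs : s ∈ 𝒜) : upperSum 𝒜 f s = f s := by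
  refine sum_eq_single_of_mem s (mem_filter.2 ⟨hs, subset_rfl⟩) fun t ht hts => ?_
  obtain ⟨ht, hst⟩ := mem_filter.1 ht
  exact absurd (eq_of_subset_of_card_le hst (by rw [h𝒜 ht, h𝒜 hs])).symm hts

lemma sum_upperSum_insert [Fintype α] [AddCommMonoid R] (h𝒜 : (𝒜 : Set (Finset α)).Sized k)
    (f : Finset α → R) (s : Finset α) :
    ∑ a ∈ sᶜ, upperSum 𝒜 f (insert a s) = (k - #s) • upperSum 𝒜 f s := by
  simp only [upperSum, sum_filter]
  rw [sum_comm, smul_sum]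
  refine sum_congr rfl fun t ht => ?_
  rw [← sum_filter, sum_const]
  split_ifs with hst
  · congr 1
    have : {a ∈ sᶜ | insert a s ⊆ t} = t \ s := by
      ext a
      simp only [mem_filter, mem_compl, mem_sdiff, insert_subset_iff]
      tauto
    rw [this, card_sdiff_of_subset hst, h𝒜 ht]
  · rw [filter_false_of_mem fun a _ hat => hst ((subset_insert a s).trans hat), card_empty,
      zero_smul, smul_zero]

lemma upperSum_eq_zero_of_card_le [Fintype α] [AddCommMonoid R] [IsAddTorsionFree R] {d : ℕ}
    (h𝒜 : (𝒜 : Set (Finset α)).Sized (d + 1)) {f : Finset α → R}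
    (hf : ∀ t, #t = d → upperSum 𝒜 f t = 0) {s : Finset α} (hs : #s ≤ d) :
    upperSum 𝒜 f s = 0 := by
  obtain ⟨m, hm⟩ := Nat.exists_eq_add_of_le hs
  induction m generalizing s with
  | zero => exact hf s hm.symm
  | succ m ih =>
    have hsum := sum_upperSum_insert h𝒜 f s
    rw [sum_eq_zero fun a ha => ih (by rw [card_insert_of_notMem (by simpa using ha)]; omega)
      (by rw [card_insert_of_notMem (by simpa using ha)]; omega)] at hsum
    exact (nsmul_eq_zero_iff_right (by omega)).1 hsum.symm

lemma sum_powerset_neg_one_pow_card_eq_ite [Ring R] (x : Finset α) :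
    ∑ u ∈ x.powerset, (-1 : R) ^ #u = if x = ∅ then 1 else 0 := by
  have := congrArg (Int.cast : ℤ → R) (sum_powerset_neg_one_pow_card (x := x))
  push_cast at this
  simpa [apply_ite (Int.cast : ℤ → R)] using this

lemma sum_powerset_neg_one_pow_mul_upperSum [CommRing R] {b s : Finset α} (hbs : b ⊆ s)
    (f : Finset α → R) :
    ∑ u ∈ (s \ b).powerset, (-1) ^ #u * upperSum 𝒜 f (b ∪ u) = ∑ t ∈ 𝒜 with s ∩ t = b, f t := by
  simp only [upperSum, sum_filter, mul_sum]
  rw [sum_comm]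
  refine sum_congr rfl fun t _ => ?_
  by_cases hbt : b ⊆ t
  · simp_rw [union_subset_iff, hbt, true_and, mul_ite, mul_zero]
    rw [← sum_filter, ← sum_mul]
    have hfilter : {u ∈ (s \ b).powerset | u ⊆ t} = (s \ b ∩ t).powerset := by
      ext u
      simp only [mem_filter, mem_powerset, subset_inter_iff]
    have hempty : s \ b ∩ t = ∅ ↔ s ∩ t = b := by
      rw [sdiff_inter_right_comm, sdiff_eq_empty_iff_subset]
      exact ⟨fun h => h.antisymm (subset_inter hbs hbt), fun h => h.le⟩
    rw [hfilter, sum_powerset_neg_one_pow_card_eq_ite]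
    simp only [hempty, ite_mul, one_mul, zero_mul]
  · have hst : s ∩ t ≠ b := fun h => hbt (h ▸ inter_subset_right)
    rw [if_neg hst]
    exact sum_eq_zero fun u _ => by rw [if_neg fun h => hbt (subset_union_left.trans h), mul_zero]

end UpperSum

section NonShattered

variable {α : Type*} [Fintype α] [DecidableEq α] {𝒜 : Finset (Finset α)} {d : ℕ}

lemma eq_zero_of_not_shatters {R : Type*} [CommRing R] [IsAddTorsionFree R]
    (h𝒜 : (𝒜 : Set (Finset α)).Sized (d + 1)) {f : Finset α → R}
    (hf : ∀ t, #t = d → upperSum 𝒜 f t = 0) {s : Finset α} (hs : s ∈ 𝒜)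
    (hshat : ¬𝒜.Shatters s) : f s = 0 := by
  obtain ⟨b, hbs, hb⟩ : ∃ b ⊆ s, ∀ t ∈ 𝒜, s ∩ t ≠ b := by
    simpa [Shatters] using hshat
  have key := sum_powerset_neg_one_pow_mul_upperSum (𝒜 := 𝒜) hbs f
  rw [sum_eq_single_of_mem (s \ b) (mem_powerset_self _), union_sdiff_of_subset hbs,
    upperSum_eq_of_mem h𝒜 f hs, filter_false_of_mem hb, sum_empty] at key
  · exact neg_one_pow_mul_eq_zero_iff.1 key
  · intro u hu hne
    have hus : u ⊆ s \ b := mem_powerset.1 hu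
    have hlt : b ∪ u ⊂ s := by
      refine ssubset_of_subset_of_ne (union_subset hbs (hus.trans sdiff_subset)) fun heq => hne ?_
      rw [← heq, union_sdiff_left,
        sdiff_eq_self_of_disjoint (disjoint_of_subset_left hus sdiff_disjoint)]
    have hcard := card_lt_card hlt
    rw [upperSum_eq_zero_of_card_le h𝒜 hf (by rw [h𝒜 hs] at hcard; omega), mul_zero]

lemma linearIndepOn_subset_indicator {𝕜 : Type*} [Field 𝕜] [CharZero 𝕜]
    (h𝒜 : (𝒜 : Set (Finset α)).Sized (d + 1)) (hshat : ∀ s ∈ 𝒜, ¬𝒜.Shatters s) :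
    LinearIndepOn 𝕜 (fun s (t : ∂ 𝒜) => if (t : Finset α) ⊆ s then (1 : 𝕜) else 0) 𝒜 := by
  rw [linearIndepOn_finset_iff]
  intro f hf s hs
  refine eq_zero_of_not_shatters h𝒜 (fun t ht => ?_) hs (hshat s hs)
  by_cases hts : t ∈ ∂ 𝒜
  · simpa [upperSum, sum_filter] using congrFun hf ⟨t, hts⟩
  · refine sum_eq_zero fun u hu => absurd ?_ hts
    obtain ⟨hu, htu⟩ := mem_filter.1 hu
    exact mem_shadow_iff_exists_mem_card_add_one.2 ⟨u, hu, htu, by rw [h𝒜 hu, ht]⟩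

theorem card_le_card_shadow_of_not_shatters (h𝒜 : (𝒜 : Set (Finset α)).Sized (d + 1))
    (hshat : ∀ s ∈ 𝒜, ¬𝒜.Shatters s) : #𝒜 ≤ #(∂ 𝒜) := by
  simpa using (linearIndepOn_subset_indicator (𝕜 := ℚ) h𝒜 hshat).fintype_card_le_finrank

end NonShattered

theorem stmt_3 (n d : ℕ) (𝒜 : Finset (Finset (Fin n)))
    (hunif : ∀ F ∈ 𝒜, F.card = d + 1)
    (hVC : ∀ S : Finset (Fin n), S.card = d + 1 → ∃ B ⊆ S, ∀ F ∈ 𝒜, F ∩ S ≠ B) :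
    𝒜.card ≤ (((Finset.univ : Finset (Fin n)).powersetCard d).filter
      (fun T => ∃ F ∈ 𝒜, T ⊆ F)).card := by
  have h𝒜 : (𝒜 : Set (Finset (Fin n))).Sized (d + 1) := hunif
  have hshadow : {T ∈ (univ : Finset (Fin n)).powersetCard d | ∃ F ∈ 𝒜, T ⊆ F} = ∂ 𝒜 := by
    ext T
    simp only [mem_filter, mem_powersetCard, subset_univ, true_and,
      mem_shadow_iff_exists_mem_card_add_one]
    constructor
    · rintro ⟨rfl, F, hF, hTF⟩
      exact ⟨F, hF, hTF, hunif F hF⟩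
    · rintro ⟨F, hF, hTF, hcard⟩
      exact ⟨by rw [hunif F hF] at hcard; omega, F, hF, hTF⟩
  have hshat : ∀ s ∈ 𝒜, ¬𝒜.Shatters s := fun s hs hsh => by
    obtain ⟨b, hbs, hb⟩ := hVC s (hunif s hs)
    obtain ⟨t, ht, hst⟩ := hsh hbs
    exact hb t ht (by rw [inter_comm, hst])
  rw [hshadow]
  exact card_le_card_shadow_of_not_shatters h𝒜 hshat
end

section
/- Any (d+1)-uniform intersecting family F ⊆ binom([n], d+1) satisfies |F| ≤ |∂_d F| (Katona's shadow theorem). -/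
/-!
Replacing `j` by `i < j` in members (the UV-compression `𝓒 {i} {j}`) preserves size, uniformity and
the intersecting property and does not increase the shadow, and it strictly decreases the sum of all
indices, so we may assume the family is shifted. For a shifted intersecting `k`-uniform family
inside a ground set `S` with largest element `m`, the members avoiding `m` and the members
containing `m` with `m` removed are again shifted and intersecting (for the latter because
`#S ≥ 2k` leaves room to shift), and their shadows embed disjointly into the shadow of the family.
Induction on `S` then reduces to the case `#S < 2k`, which is the local LYM inequality.
-/

open Finset UV
open scoped FinsetFamily

namespace Finset

variable {α : Type*} [DecidableEq α] {𝒜 : Finset (Finset α)} {A B S X Y : Finset α} {a i j : α}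
  {k r : ℕ}

lemma compress_singleton_of_notMem_of_mem (hi : i ∉ A) (hj : j ∈ A) :
    compress {i} {j} A = insert i (A.erase j) := by
  rw [compress_of_disjoint_of_le (disjoint_singleton_left.2 hi) (singleton_subset_iff.2 hj)]
  ext x
  simp only [sup_eq_union, mem_sdiff, mem_union, mem_singleton, mem_insert, mem_erase]
  grind

lemma notMem_and_mem_of_compress_singleton_ne (h : compress {i} {j} A ≠ A) : i ∉ A ∧ j ∈ A := by
  contrapose! h
  rw [compress, if_neg]
  rintro ⟨hi, hj⟩
  exact h (disjoint_singleton_left.1 hi) (singleton_subset_iff.1 hj)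

lemma mem_compression_singleton (hX : X ∈ 𝓒 {i} {j} 𝒜) :
    X ∈ 𝒜 ∧ compress {i} {j} X ∈ 𝒜 ∨ ∃ A ∈ 𝒜, i ∉ A ∧ j ∈ A ∧ X = insert i (A.erase j) := by
  obtain hX | ⟨hX, A, hA, rfl⟩ := UV.mem_compression.1 hX
  · exact .inl hX
  obtain ⟨hi, hj⟩ := notMem_and_mem_of_compress_singleton_ne fun h => hX (h ▸ hA)
  exact .inr ⟨A, hA, hi, hj, compress_singleton_of_notMem_of_mem hi hj⟩

lemma not_disjoint_insert_erase_of_not_disjoint_compress (hi : i ∉ A) (hAY : ¬Disjoint A Y)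
    (hAY' : ¬Disjoint A (compress {i} {j} Y)) : ¬Disjoint (insert i (A.erase j)) Y := by
  rw [not_disjoint_iff] at *
  obtain ⟨e, heA, heY⟩ := hAY
  obtain rfl | hej := eq_or_ne e j
  · by_cases hiY : i ∈ Y
    · exact ⟨i, mem_insert_self _ _, hiY⟩
    rw [compress_singleton_of_notMem_of_mem hiY heY] at hAY'
    obtain ⟨f, hfA, hfY⟩ := hAY'
    obtain ⟨hfe, hfY⟩ :=
      mem_erase.1 ((mem_insert.1 hfY).resolve_left (ne_of_mem_of_not_mem hfA hi))
    exact ⟨f, mem_insert_of_mem (mem_erase.2 ⟨hfe, hfA⟩), hfY⟩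
  · exact ⟨e, mem_insert_of_mem (mem_erase.2 ⟨hej, heA⟩), heY⟩

theorem _root_.Set.Intersecting.uvCompression_singleton
    (h𝒜 : (𝒜 : Set (Finset α)).Intersecting) (i j : α) :
    (𝓒 {i} {j} 𝒜 : Set (Finset α)).Intersecting := by
  intro X hX Y hY
  rcases mem_compression_singleton hX with ⟨hX, hcX⟩ | ⟨A, hA, hiA, -, rfl⟩ <;>
    rcases mem_compression_singleton hY with ⟨hY, hcY⟩ | ⟨B, hB, hiB, -, rfl⟩
  · exact h𝒜 hX hY
  · rw [disjoint_comm]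
    exact not_disjoint_insert_erase_of_not_disjoint_compress hiB (h𝒜 hB hX) (h𝒜 hB hcX)
  · exact not_disjoint_insert_erase_of_not_disjoint_compress hiA (h𝒜 hA hY) (h𝒜 hA hcY)
  · exact not_disjoint_iff.2 ⟨i, mem_insert_self _ _, mem_insert_self _ _⟩

lemma card_shadow_compression_singleton_le (i j : α) : #(∂ (𝓒 {i} {j} 𝒜)) ≤ #(∂ 𝒜) :=
  card_shadow_compression_le _ _ fun x hx => ⟨j, mem_singleton_self j, by
    rw [mem_singleton.1 hx, erase_singleton, erase_singleton]
    exact isCompressed_self _ _⟩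

lemma shadow_nonMemberSubfamily_subset (a : α) (𝒜 : Finset (Finset α)) :
    ∂ (𝒜.nonMemberSubfamily a) ⊆ (∂ 𝒜).nonMemberSubfamily a := by
  intro t ht
  obtain ⟨s, hs, b, hb, rfl⟩ := mem_shadow_iff.1 ht
  rw [mem_nonMemberSubfamily] at hs ⊢
  exact ⟨erase_mem_shadow hs.1 hb, fun h => hs.2 (mem_of_mem_erase h)⟩

lemma shadow_memberSubfamily_subset (a : α) (𝒜 : Finset (Finset α)) :
    ∂ (𝒜.memberSubfamily a) ⊆ (∂ 𝒜).memberSubfamily a := by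
  intro t ht
  obtain ⟨s, hs, b, hb, rfl⟩ := mem_shadow_iff.1 ht
  rw [mem_memberSubfamily] at hs ⊢
  have hab : a ≠ b := ne_of_mem_of_not_mem hb hs.2 |>.symm
  rw [← erase_insert_of_ne hab]
  exact ⟨erase_mem_shadow hs.1 (mem_insert_of_mem hb), fun h => hs.2 (mem_of_mem_erase h)⟩

lemma card_shadow_memberSubfamily_add_card_shadow_nonMemberSubfamily_le (a : α)
    (𝒜 : Finset (Finset α)) :
    #(∂ (𝒜.memberSubfamily a)) + #(∂ (𝒜.nonMemberSubfamily a)) ≤ #(∂ 𝒜) :=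
  calc #(∂ (𝒜.memberSubfamily a)) + #(∂ (𝒜.nonMemberSubfamily a))
      ≤ #((∂ 𝒜).memberSubfamily a) + #((∂ 𝒜).nonMemberSubfamily a) :=
        add_le_add (card_le_card (shadow_memberSubfamily_subset a 𝒜))
          (card_le_card (shadow_nonMemberSubfamily_subset a 𝒜))
    _ = #(∂ 𝒜) := card_memberSubfamily_add_card_nonMemberSubfamily a _

lemma subset_of_mem_nonMemberSubfamily (hS : ∀ A ∈ 𝒜, A ⊆ insert a S)
    (hB : B ∈ 𝒜.nonMemberSubfamily a) : B ⊆ S :=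
  (subset_insert_iff_of_notMem (mem_nonMemberSubfamily.1 hB).2).1
    (hS _ (mem_nonMemberSubfamily.1 hB).1)

lemma subset_of_mem_memberSubfamily (hS : ∀ A ∈ 𝒜, A ⊆ insert a S)
    (hB : B ∈ 𝒜.memberSubfamily a) : B ⊆ S :=
  (insert_subset_insert_iff (mem_memberSubfamily.1 hB).2).1
    (hS _ (mem_memberSubfamily.1 hB).1)

lemma _root_.Set.Sized.memberSubfamily (h𝒜 : (𝒜 : Set (Finset α)).Sized k) (a : α) :
    (𝒜.memberSubfamily a : Set (Finset α)).Sized (k - 1) := by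
  intro B hB
  rw [mem_coe, mem_memberSubfamily] at hB
  rw [← h𝒜 hB.1, card_insert_of_notMem hB.2, Nat.add_sub_cancel]

lemma card_mul_le_card_shadow_mul_of_subset (hS : ∀ A ∈ 𝒜, A ⊆ S)
    (h𝒜 : (𝒜 : Set (Finset α)).Sized r) : #𝒜 * r ≤ #(∂ 𝒜) * (#S - r + 1) := by
  refine card_mul_le_card_mul' (· ⊆ ·) (fun s hs => ?_) (fun t ht => ?_)
  · rw [← h𝒜 hs, ← card_image_of_injOn s.erase_injOn]
    refine card_le_card ?_
    simp_rw [image_subset_iff, mem_bipartiteBelow]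
    exact fun a ha => ⟨erase_mem_shadow hs ha, erase_subset _ _⟩
  obtain ⟨s, hs, hts, hcard⟩ := mem_shadow_iff_exists_mem_card_add_one.1 ht
  have hsupsets : 𝒜.bipartiteAbove (· ⊆ ·) t ⊆ (S \ t).image (insert · t) := by
    intro u hu
    rw [mem_bipartiteAbove] at hu
    obtain ⟨a, ha, rfl⟩ := exists_eq_insert_iff.2 ⟨hu.2, by rw [h𝒜 hu.1, ← h𝒜 hs, hcard]⟩
    exact mem_image_of_mem _ (mem_sdiff.2 ⟨hS _ hu.1 (mem_insert_self a t), ha⟩)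
  calc #(𝒜.bipartiteAbove (· ⊆ ·) t) ≤ #(S \ t) := (card_le_card hsupsets).trans card_image_le
    _ = #S - r + 1 := by
      have := card_le_card (hS s hs)
      rw [card_sdiff_of_subset (hts.trans (hS s hs)), ← h𝒜 hs, hcard] at *
      omega

lemma card_le_card_shadow_of_card_lt (hS : ∀ A ∈ 𝒜, A ⊆ S)
    (h𝒜 : (𝒜 : Set (Finset α)).Sized k) (hSk : #S < 2 * k) : #𝒜 ≤ #(∂ 𝒜) :=
  Nat.le_of_mul_le_mul_right ((card_mul_le_card_shadow_mul_of_subset hS h𝒜).trans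
    (Nat.mul_le_mul_left _ (by omega))) (by omega)

section LinearOrder

variable [LinearOrder α] {ℬ : Finset (Finset α)} {m : α}

def IsShifted (𝒜 : Finset (Finset α)) : Prop :=
  ∀ ⦃A⦄, A ∈ 𝒜 → ∀ ⦃i j⦄, i < j → i ∉ A → j ∈ A → insert i (A.erase j) ∈ 𝒜

lemma IsShifted.nonMemberSubfamily (hℬ : IsShifted ℬ) (hm : ∀ A ∈ ℬ, ∀ x ∈ A, x ≤ m) :
    IsShifted (ℬ.nonMemberSubfamily m) := by
  intro A hA i j hij hi hj
  rw [mem_nonMemberSubfamily] at hA ⊢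
  have him : i ≠ m := (hij.trans_le (hm A hA.1 j hj)).ne
  exact ⟨hℬ hA.1 hij hi hj, by simp [him.symm, hA.2]⟩

lemma IsShifted.memberSubfamily (hℬ : IsShifted ℬ) (hm : ∀ A ∈ ℬ, ∀ x ∈ A, x ≤ m) :
    IsShifted (ℬ.memberSubfamily m) := by
  intro B hB i j hij hi hj
  rw [mem_memberSubfamily] at hB ⊢
  have hmj : m ≠ j := ne_of_mem_of_not_mem hj hB.2 |>.symm
  have him : i ≠ m := (hij.trans_le (hm _ hB.1 j (mem_insert_of_mem hj))).ne
  have hshifted := hℬ hB.1 hij (by simp [him, hi]) (mem_insert_of_mem hj)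
  rw [erase_insert_of_ne hmj, insert_comm] at hshifted
  exact ⟨hshifted, by simp [him.symm, hB.2]⟩

/-- Two members `B, C` of size `k - 1` cannot cover `S`, so some `x < m` avoids both; shifting `m`
to `x` in `insert m B` gives a member of `ℬ` that must meet `insert m C` inside `C`. -/
lemma IsShifted.intersecting_memberSubfamily (hℬ : IsShifted ℬ)
    (hint : (ℬ : Set (Finset α)).Intersecting) (hsized : (ℬ : Set (Finset α)).Sized k)
    (hS : ∀ A ∈ ℬ, A ⊆ insert m S) (hm : ∀ x ∈ S, x < m) (hk : 2 * k ≤ #S + 1) :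
    (ℬ.memberSubfamily m : Set (Finset α)).Intersecting := by
  intro B hB C hC
  have hBS := subset_of_mem_memberSubfamily hS hB
  have hCS := subset_of_mem_memberSubfamily hS hC
  rw [mem_coe, mem_memberSubfamily] at hB hC
  have hBk : #B + 1 = k := (card_insert_of_notMem hB.2).symm.trans (hsized hB.1)
  have hCk : #C + 1 = k := (card_insert_of_notMem hC.2).symm.trans (hsized hC.1)
  have hcard : #(B ∪ C) < #S := (card_union_le B C).trans_lt (by omega)
  obtain ⟨x, hxS, hxBC⟩ := exists_mem_notMem_of_card_lt_card hcard
  rw [mem_union, not_or] at hxBC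
  have hxB : insert x B ∈ ℬ := by
    have := hℬ hB.1 (hm x hxS) (by simp [(hm x hxS).ne, hxBC.1]) (mem_insert_self m B)
    rwa [erase_insert hB.2] at this
  obtain ⟨e, hexB, heC⟩ := not_disjoint_iff.1 (hint hxB hC.1)
  rw [not_disjoint_iff]
  rcases mem_insert.1 hexB with rfl | heB
  · simp [(hm e hxS).ne, hxBC.2] at heC
  · exact ⟨e, heB, (mem_insert.1 heC).resolve_left (ne_of_mem_of_not_mem heB hB.2)⟩

theorem IsShifted.card_le_card_shadow (S : Finset α) (hS : ∀ A ∈ ℬ, A ⊆ S)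
    (hsized : (ℬ : Set (Finset α)).Sized k) (hint : (ℬ : Set (Finset α)).Intersecting)
    (hℬ : IsShifted ℬ) : #ℬ ≤ #(∂ ℬ) := by
  induction S using Finset.induction_on_max generalizing k ℬ with
  | empty =>
    have : ℬ = ∅ := eq_empty_of_forall_notMem fun A hA =>
      hint.ne_bot hA (subset_empty.1 (hS A hA))
    simp [this]
  | insert m S hm ih =>
    by_cases hsmall : #(insert m S) < 2 * k
    · exact card_le_card_shadow_of_card_lt hS hsized hsmall
    have hk : 2 * k ≤ #S + 1 := by
      have := card_insert_le m S
      omega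
    have hle : ∀ A ∈ ℬ, ∀ x ∈ A, x ≤ m := fun A hA x hx =>
      (mem_insert.1 (hS A hA hx)).elim le_of_eq fun h => (hm x h).le
    have hmember := ih (ℬ := ℬ.memberSubfamily m) (fun B => subset_of_mem_memberSubfamily hS)
      (hsized.memberSubfamily m) (hℬ.intersecting_memberSubfamily hint hsized hS hm hk)
      (hℬ.memberSubfamily hle)
    have hnonmember := ih (ℬ := ℬ.nonMemberSubfamily m)
      (fun A => subset_of_mem_nonMemberSubfamily hS)
      (hsized.mono fun A hA => (mem_nonMemberSubfamily.1 hA).1)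
      (hint.mono fun A hA => (mem_nonMemberSubfamily.1 hA).1) (hℬ.nonMemberSubfamily hle)
    calc #ℬ = #(ℬ.memberSubfamily m) + #(ℬ.nonMemberSubfamily m) :=
          (card_memberSubfamily_add_card_nonMemberSubfamily m ℬ).symm
      _ ≤ #(∂ (ℬ.memberSubfamily m)) + #(∂ (ℬ.nonMemberSubfamily m)) :=
          add_le_add hmember hnonmember
      _ ≤ #(∂ ℬ) := card_shadow_memberSubfamily_add_card_shadow_nonMemberSubfamily_le m ℬ

end LinearOrder

section Fin

variable {n : ℕ}

def indexSum (𝒜 : Finset (Finset (Fin n))) : ℕ := ∑ A ∈ 𝒜, ∑ a ∈ A, (a : ℕ)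

lemma sum_val_compress_singleton_lt {i j : Fin n} (hij : i < j) {A : Finset (Fin n)}
    (h : compress {i} {j} A ≠ A) :
    ∑ a ∈ compress {i} {j} A, (a : ℕ) < ∑ a ∈ A, (a : ℕ) := by
  obtain ⟨hi, hj⟩ := notMem_and_mem_of_compress_singleton_ne h
  rw [compress_singleton_of_notMem_of_mem hi hj,
    sum_insert fun h => hi (mem_of_mem_erase h), ← sum_erase_add _ _ hj]
  have : (i : ℕ) < j := hij
  omega

lemma indexSum_compression_lt {i j : Fin n} (hij : i < j) {𝒜 : Finset (Finset (Fin n))}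
    (h : 𝓒 {i} {j} 𝒜 ≠ 𝒜) : indexSum (𝓒 {i} {j} 𝒜) < indexSum 𝒜 := by
  rw [compression] at h ⊢
  have hsplit := filter_union_filter_not_eq (fun A => compress {i} {j} A ∈ 𝒜) 𝒜
  have hmoved : {A ∈ 𝒜 | compress {i} {j} A ∉ 𝒜}.Nonempty := by
    contrapose! h
    rw [filter_image, h, image_empty, union_empty]
    rwa [h, union_empty] at hsplit
  rw [indexSum, indexSum, sum_union compress_disjoint]
  conv_rhs => rw [← hsplit]
  rw [sum_union (disjoint_filter_filter_not _ _ _), add_lt_add_iff_left, filter_image,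
    sum_image compress_injOn]
  refine sum_lt_sum_of_nonempty hmoved fun A hA => sum_val_compress_singleton_lt hij fun hfix => ?_
  rw [mem_filter, hfix] at hA
  exact hA.2 hA.1

theorem exists_isShifted (𝒜 : Finset (Finset (Fin n)))
    (hsized : (𝒜 : Set (Finset (Fin n))).Sized k) (h𝒜 : (𝒜 : Set (Finset (Fin n))).Intersecting) :
    ∃ ℬ : Finset (Finset (Fin n)), #ℬ = #𝒜 ∧ #(∂ ℬ) ≤ #(∂ 𝒜) ∧
      (ℬ : Set (Finset (Fin n))).Sized k ∧ (ℬ : Set (Finset (Fin n))).Intersecting ∧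
      IsShifted ℬ := by
  by_cases hshift : IsShifted 𝒜
  · exact ⟨𝒜, rfl, le_rfl, hsized, h𝒜, hshift⟩
  obtain ⟨A, hA, i, j, hij, hi, hj, hA'⟩ : ∃ A ∈ 𝒜, ∃ i j, i < j ∧ i ∉ A ∧ j ∈ A ∧
      insert i (A.erase j) ∉ 𝒜 := by
    simpa [IsShifted] using hshift
  have hne : 𝓒 {i} {j} 𝒜 ≠ 𝒜 := fun h => hA' <| by
    rw [← h, ← compress_singleton_of_notMem_of_mem hi hj]
    exact compress_mem_compression hA
  obtain ⟨ℬ, hcard, hshadow, hℬ⟩ := exists_isShifted (𝓒 {i} {j} 𝒜)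
    (hsized.uvCompression rfl) (h𝒜.uvCompression_singleton i j)
  exact ⟨ℬ, hcard.trans (card_compression _ _ _),
    hshadow.trans (card_shadow_compression_singleton_le i j), hℬ⟩
termination_by indexSum 𝒜
decreasing_by exact indexSum_compression_lt hij hne

end Fin

lemma filter_powersetCard_exists_superset_eq_shadow [Fintype α] {d : ℕ}
    (h𝒜 : (𝒜 : Set (Finset α)).Sized (d + 1)) :
    {T ∈ powersetCard d (univ : Finset α) | ∃ F ∈ 𝒜, T ⊆ F} = ∂ 𝒜 := by
  ext T
  rw [mem_filter, mem_powersetCard, mem_shadow_iff_exists_mem_card_add_one]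
  constructor
  · rintro ⟨⟨-, hT⟩, F, hF, hTF⟩
    exact ⟨F, hF, hTF, by rw [h𝒜 hF, hT]⟩
  · rintro ⟨F, hF, hTF, hcard⟩
    rw [h𝒜 hF] at hcard
    exact ⟨⟨subset_univ T, by omega⟩, F, hF, hTF⟩

end Finset

theorem stmt_7 (n d : ℕ) (𝒜 : Finset (Finset (Fin n)))
    (hunif : ∀ F ∈ 𝒜, F.card = d + 1)
    (hint : ∀ F ∈ 𝒜, ∀ G ∈ 𝒜, (F ∩ G).Nonempty) :
    𝒜.card ≤ (((Finset.univ : Finset (Fin n)).powersetCard d).filter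
      (fun T => ∃ F ∈ 𝒜, T ⊆ F)).card := by
  have hsized : (𝒜 : Set (Finset (Fin n))).Sized (d + 1) := hunif
  have hintersecting : (𝒜 : Set (Finset (Fin n))).Intersecting := fun F hF G hG =>
    not_disjoint_iff_nonempty_inter.2 (hint F hF G hG)
  obtain ⟨ℬ, hcard, hshadow, hℬsized, hℬint, hℬ⟩ := exists_isShifted 𝒜 hsized hintersecting
  rw [filter_powersetCard_exists_superset_eq_shadow hsized]
  calc #𝒜 = #ℬ := hcard.symm
    _ ≤ #(∂ ℬ) := hℬ.card_le_card_shadow univ (fun A _ => subset_univ A) hℬsized hℬint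
    _ ≤ #(∂ 𝒜) := hshadow
end

section
/- For n ≥ 2(d+1), there exists a (d+1)-uniform family F ⊆ binom([n], d+1) with VC-dimension at most d and |F| = C(n-1, d) + C(n-4, d-2). (Ahlswede–Khachatrian construction showing the star is not optimal.) -/
open Finset

private lemma trace_notmem {α : Type*} [DecidableEq α] {F S B : Finset α}
    (h : F ∩ S = B) {x : α} (hxS : x ∈ S) (hxB : x ∉ B) : x ∉ F := by
  intro hxF
  exact hxB (h ▸ Finset.mem_inter.2 ⟨hxF, hxS⟩)

private lemma trace_mem {α : Type*} [DecidableEq α] {F S B : Finset α}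
    (h : F ∩ S = B) {x : α} (hxB : x ∈ B) : x ∈ F := by
  rw [← h] at hxB
  exact (Finset.mem_inter.1 hxB).1

set_option maxHeartbeats 2000000 in
theorem stmt_8 (n d : ℕ) (hd : 2 ≤ d) (hn : 2 * (d + 1) ≤ n) :
    ∃ 𝒜 : Finset (Finset (Fin n)),
      (∀ F ∈ 𝒜, F.card = d + 1) ∧
      (∀ S : Finset (Fin n), S.card = d + 1 → ∃ B ⊆ S, ∀ F ∈ 𝒜, F ∩ S ≠ B) ∧
      𝒜.card = (n - 1).choose d + (n - 4).choose (d - 2) := by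
  classical
  have h4 : 4 ≤ n := by omega
  set e0 : Fin n := ⟨0, by omega⟩ with he0
  set e1 : Fin n := ⟨1, by omega⟩ with he1
  set e2 : Fin n := ⟨2, by omega⟩ with he2
  set e3 : Fin n := ⟨3, by omega⟩ with he3
  have h01 : e0 ≠ e1 := by simp [he0, he1, Fin.ext_iff]
  have h02 : e0 ≠ e2 := by simp [he0, he2, Fin.ext_iff]
  have h03 : e0 ≠ e3 := by simp [he0, he3, Fin.ext_iff]
  have h12 : e1 ≠ e2 := by simp [he1, he2, Fin.ext_iff]
  have h13 : e1 ≠ e3 := by simp [he1, he3, Fin.ext_iff]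
  have h23 : e2 ≠ e3 := by simp [he2, he3, Fin.ext_iff]
  set M : Finset (Fin n) := Finset.univ \ {e0, e1, e2, e3} with hM
  have hMmem : ∀ x : Fin n, x ∈ M ↔ (x ≠ e0 ∧ x ≠ e1 ∧ x ≠ e2 ∧ x ≠ e3) := by
    intro x; simp [hM]
  have hMcard : M.card = n - 4 := by
    rw [hM, Finset.card_sdiff_of_subset (Finset.subset_univ _), Finset.card_univ, Fintype.card_fin]
    have : ({e0, e1, e2, e3} : Finset (Fin n)).card = 4 := by
      rw [Finset.card_insert_of_notMem (by simp [h01, h02, h03]),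
        Finset.card_insert_of_notMem (by simp [h12, h13]),
        Finset.card_insert_of_notMem (by simp [h23]), Finset.card_singleton]
    rw [this]
  set Star : Finset (Finset (Fin n)) :=
    (Finset.powersetCard d (Finset.univ.erase e0)).image (insert e0) with hStarDef
  set Rf : Finset (Finset (Fin n)) := (Finset.powersetCard d M).image (insert e0) with hRfDef
  set Bf : Finset (Finset (Fin n)) := (Finset.powersetCard d M).image (insert e1) with hBfDef
  set Cf : Finset (Finset (Fin n)) :=
    (Finset.powersetCard (d - 2) M).image (fun D => insert e1 (insert e2 (insert e3 D))) with hCfDef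
  -- characterizations
  have hStar : ∀ F : Finset (Fin n), F ∈ Star ↔ (F.card = d + 1 ∧ e0 ∈ F) := by
    intro F
    constructor
    · intro hF
      obtain ⟨G, hG, rfl⟩ := Finset.mem_image.1 hF
      rw [Finset.mem_powersetCard] at hG
      have h0G : e0 ∉ G := fun h => (Finset.mem_erase.1 (hG.1 h)).1 rfl
      exact ⟨by rw [Finset.card_insert_of_notMem h0G, hG.2], Finset.mem_insert_self _ _⟩
    · rintro ⟨hc, h0⟩
      refine Finset.mem_image.2 ⟨F.erase e0, ?_, Finset.insert_erase h0⟩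
      rw [Finset.mem_powersetCard]
      constructor
      · intro x hx
        exact Finset.mem_erase.2 ⟨(Finset.mem_erase.1 hx).1, Finset.mem_univ x⟩
      · rw [Finset.card_erase_of_mem h0, hc]; omega
  have hRf : ∀ F : Finset (Fin n),
      F ∈ Rf ↔ (F.card = d + 1 ∧ e0 ∈ F ∧ e1 ∉ F ∧ e2 ∉ F ∧ e3 ∉ F) := by
    intro F
    constructor
    · intro hF
      obtain ⟨G, hG, rfl⟩ := Finset.mem_image.1 hF
      rw [Finset.mem_powersetCard] at hG
      have h0G : e0 ∉ G := fun h => ((hMmem e0).1 (hG.1 h)).1 rfl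
      refine ⟨by rw [Finset.card_insert_of_notMem h0G, hG.2], Finset.mem_insert_self _ _,
        ?_, ?_, ?_⟩ <;>
      · simp only [Finset.mem_insert]
        rintro (h | h)
        · first
          | exact h01 h.symm
          | exact h02 h.symm
          | exact h03 h.symm
        · have := (hMmem _).1 (hG.1 h); tauto
    · rintro ⟨hc, h0, h1, h2, h3⟩
      refine Finset.mem_image.2 ⟨F.erase e0, ?_, Finset.insert_erase h0⟩
      rw [Finset.mem_powersetCard]
      constructor
      · intro x hx
        obtain ⟨hx0, hxF⟩ := Finset.mem_erase.1 hx
        exact (hMmem x).2 ⟨hx0, fun h => h1 (h ▸ hxF), fun h => h2 (h ▸ hxF),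
          fun h => h3 (h ▸ hxF)⟩
      · rw [Finset.card_erase_of_mem h0, hc]; omega
  have hBf : ∀ F : Finset (Fin n),
      F ∈ Bf ↔ (F.card = d + 1 ∧ e1 ∈ F ∧ e0 ∉ F ∧ e2 ∉ F ∧ e3 ∉ F) := by
    intro F
    constructor
    · intro hF
      obtain ⟨G, hG, rfl⟩ := Finset.mem_image.1 hF
      rw [Finset.mem_powersetCard] at hG
      have h1G : e1 ∉ G := fun h => ((hMmem e1).1 (hG.1 h)).2.1 rfl
      refine ⟨by rw [Finset.card_insert_of_notMem h1G, hG.2], Finset.mem_insert_self _ _,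
        ?_, ?_, ?_⟩ <;>
      · simp only [Finset.mem_insert]
        rintro (h | h)
        · first
          | exact h01 h
          | exact h12 h.symm
          | exact h13 h.symm
        · have := (hMmem _).1 (hG.1 h); tauto
    · rintro ⟨hc, h1, h0, h2, h3⟩
      refine Finset.mem_image.2 ⟨F.erase e1, ?_, Finset.insert_erase h1⟩
      rw [Finset.mem_powersetCard]
      constructor
      · intro x hx
        obtain ⟨hx1, hxF⟩ := Finset.mem_erase.1 hx
        exact (hMmem x).2 ⟨fun h => h0 (h ▸ hxF), hx1, fun h => h2 (h ▸ hxF),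
          fun h => h3 (h ▸ hxF)⟩
      · rw [Finset.card_erase_of_mem h1, hc]; omega
  have hCf : ∀ F : Finset (Fin n),
      F ∈ Cf ↔ (F.card = d + 1 ∧ e0 ∉ F ∧ e1 ∈ F ∧ e2 ∈ F ∧ e3 ∈ F) := by
    intro F
    constructor
    · intro hF
      obtain ⟨D, hD, rfl⟩ := Finset.mem_image.1 hF
      rw [Finset.mem_powersetCard] at hD
      have hD1 : e1 ∉ D := fun h => ((hMmem e1).1 (hD.1 h)).2.1 rfl
      have hD2 : e2 ∉ D := fun h => ((hMmem e2).1 (hD.1 h)).2.2.1 rfl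
      have hD3 : e3 ∉ D := fun h => ((hMmem e3).1 (hD.1 h)).2.2.2 rfl
      refine ⟨?_, ?_, by simp, by simp, by simp⟩
      · rw [Finset.card_insert_of_notMem (by simp [h12, h13, hD1]),
          Finset.card_insert_of_notMem (by simp [h23, hD2]),
          Finset.card_insert_of_notMem hD3, hD.2]
        omega
      · simp only [Finset.mem_insert]
        push_neg
        exact ⟨h01, h02, h03, fun h => ((hMmem e0).1 (hD.1 h)).1 rfl⟩
    · rintro ⟨hc, h0, h1, h2, h3⟩
      have h3' : e3 ∈ (F.erase e1).erase e2 := by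
        rw [Finset.mem_erase, Finset.mem_erase]
        exact ⟨h23.symm, h13.symm, h3⟩
      have h2' : e2 ∈ F.erase e1 := Finset.mem_erase.2 ⟨h12.symm, h2⟩
      refine Finset.mem_image.2 ⟨((F.erase e1).erase e2).erase e3, ?_, ?_⟩
      · rw [Finset.mem_powersetCard]
        constructor
        · intro x hx
          simp only [Finset.mem_erase] at hx
          exact (hMmem x).2 ⟨fun h => h0 (h ▸ hx.2.2.2), hx.2.2.1, hx.2.1, hx.1⟩
        · rw [Finset.card_erase_of_mem h3', Finset.card_erase_of_mem h2',
            Finset.card_erase_of_mem h1, hc]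
          omega
      · rw [Finset.insert_erase h3', Finset.insert_erase h2', Finset.insert_erase h1]
  set 𝒜 : Finset (Finset (Fin n)) := ((Star \ Rf) ∪ Bf) ∪ Cf with h𝒜Def
  -- membership implies the defining property
  have h𝒜 : ∀ F ∈ 𝒜, F.card = d + 1 ∧
      ((e0 ∈ F ∧ (e1 ∈ F ∨ e2 ∈ F ∨ e3 ∈ F)) ∨
        (e0 ∉ F ∧ e1 ∈ F ∧ (e2 ∈ F ↔ e3 ∈ F))) := by
    intro F hF
    rw [h𝒜Def, Finset.mem_union, Finset.mem_union, Finset.mem_sdiff] at hF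
    rcases hF with (⟨hS, hnR⟩ | hB) | hC
    · obtain ⟨hcard, h0⟩ := (hStar F).1 hS
      refine ⟨hcard, Or.inl ⟨h0, ?_⟩⟩
      by_contra hcon
      push_neg at hcon
      exact hnR ((hRf F).2 ⟨hcard, h0, hcon.1, hcon.2.1, hcon.2.2⟩)
    · obtain ⟨hcard, h1, h0, h2, h3⟩ := (hBf F).1 hB
      exact ⟨hcard, Or.inr ⟨h0, h1, by tauto⟩⟩
    · obtain ⟨hcard, h0, h1, h2, h3⟩ := (hCf F).1 hC
      exact ⟨hcard, Or.inr ⟨h0, h1, by tauto⟩⟩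
  refine ⟨𝒜, fun F hF => (h𝒜 F hF).1, ?_, ?_⟩
  · -- no (d+1)-set is shattered
    intro S hS
    -- helper: F ∩ S = S → F = S
    have hfull : ∀ F ∈ 𝒜, F ∩ S = S → F = S := by
      intro F hF h
      have hsub : S ⊆ F := fun x hx => trace_mem h hx
      exact (Finset.eq_of_subset_of_card_le hsub (by rw [hS, (h𝒜 F hF).1])).symm
    by_cases h0 : e0 ∈ S
    · by_cases h1 : e1 ∈ S
      · -- B = (S.erase e0).erase e1
        refine ⟨(S.erase e0).erase e1, (Finset.erase_subset _ _).trans (Finset.erase_subset _ _),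
          fun F hF hFS => ?_⟩
        have hF0 : e0 ∉ F := trace_notmem hFS h0 (by simp)
        have hF1 : e1 ∉ F := trace_notmem hFS h1 (by simp [h01])
        rcases (h𝒜 F hF).2 with ⟨h, _⟩ | ⟨_, h, _⟩
        · exact hF0 h
        · exact hF1 h
      · by_cases h2 : e2 ∈ S
        · by_cases h3 : e3 ∈ S
          · -- B = (S.erase e0).erase e3
            refine ⟨(S.erase e0).erase e3,
              (Finset.erase_subset _ _).trans (Finset.erase_subset _ _), fun F hF hFS => ?_⟩
            have hF0 : e0 ∉ F := trace_notmem hFS h0 (by simp)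
            have hF3 : e3 ∉ F := trace_notmem hFS h3 (by simp [h03])
            have hF2 : e2 ∈ F := trace_mem hFS (Finset.mem_erase.2 ⟨h23, Finset.mem_erase.2 ⟨fun h => h02 h.symm, h2⟩⟩)
            rcases (h𝒜 F hF).2 with ⟨h, _⟩ | ⟨_, _, hiff⟩
            · exact hF0 h
            · exact hF3 (hiff.1 hF2)
          · -- e2 ∈ S, e3 ∉ S : B = S.erase e0
            refine ⟨S.erase e0, Finset.erase_subset _ _, fun F hF hFS => ?_⟩
            have hF0 : e0 ∉ F := trace_notmem hFS h0 (by simp)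
            rcases (h𝒜 F hF).2 with ⟨h, _⟩ | ⟨_, hF1, hiff⟩
            · exact hF0 h
            have hsub : insert e1 (S.erase e0) ⊆ F := by
              intro x hx
              rcases Finset.mem_insert.1 hx with rfl | hx
              · exact hF1
              · exact trace_mem hFS hx
            have hcard : (insert e1 (S.erase e0)).card = d + 1 := by
              rw [Finset.card_insert_of_notMem (fun h => h1 (Finset.mem_of_mem_erase h)),
                Finset.card_erase_of_mem h0, hS]
              omega
            have hFeq : F = insert e1 (S.erase e0) :=
              (Finset.eq_of_subset_of_card_le hsub (by rw [(h𝒜 F hF).1, hcard])).symm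
            have hF2 : e2 ∈ F := by
              rw [hFeq]
              exact Finset.mem_insert.2 (Or.inr (Finset.mem_erase.2 ⟨fun h => h02 h.symm, h2⟩))
            have hF3 : e3 ∉ F := by
              rw [hFeq]
              intro h
              rcases Finset.mem_insert.1 h with h | h
              · exact h13 h.symm
              · exact h3 (Finset.mem_of_mem_erase h)
            exact hF3 (hiff.1 hF2)
        · by_cases h3 : e3 ∈ S
          · -- e2 ∉ S, e3 ∈ S : B = S.erase e0
            refine ⟨S.erase e0, Finset.erase_subset _ _, fun F hF hFS => ?_⟩
            have hF0 : e0 ∉ F := trace_notmem hFS h0 (by simp)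
            rcases (h𝒜 F hF).2 with ⟨h, _⟩ | ⟨_, hF1, hiff⟩
            · exact hF0 h
            have hsub : insert e1 (S.erase e0) ⊆ F := by
              intro x hx
              rcases Finset.mem_insert.1 hx with rfl | hx
              · exact hF1
              · exact trace_mem hFS hx
            have hcard : (insert e1 (S.erase e0)).card = d + 1 := by
              rw [Finset.card_insert_of_notMem (fun h => h1 (Finset.mem_of_mem_erase h)),
                Finset.card_erase_of_mem h0, hS]
              omega
            have hFeq : F = insert e1 (S.erase e0) :=
              (Finset.eq_of_subset_of_card_le hsub (by rw [(h𝒜 F hF).1, hcard])).symm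
            have hF3 : e3 ∈ F := by
              rw [hFeq]
              exact Finset.mem_insert.2 (Or.inr (Finset.mem_erase.2 ⟨fun h => h03 h.symm, h3⟩))
            have hF2 : e2 ∉ F := by
              rw [hFeq]
              intro h
              rcases Finset.mem_insert.1 h with h | h
              · exact h12 h.symm
              · exact h2 (Finset.mem_of_mem_erase h)
            exact hF2 (hiff.2 hF3)
          · -- e1, e2, e3 ∉ S : B = S
            refine ⟨S, Finset.Subset.refl S, fun F hF hFS => ?_⟩
            have hFeq := hfull F hF hFS
            subst hFeq
            rcases (h𝒜 F hF).2 with ⟨_, h | h | h⟩ | ⟨h, _⟩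
            · exact h1 h
            · exact h2 h
            · exact h3 h
            · exact h h0
    · by_cases h1 : e1 ∈ S
      · by_cases h2 : e2 ∈ S
        · by_cases h3 : e3 ∈ S
          · -- B = ((S.erase e1).erase e2).erase e3
            refine ⟨((S.erase e1).erase e2).erase e3,
              ((Finset.erase_subset _ _).trans (Finset.erase_subset _ _)).trans
                (Finset.erase_subset _ _), fun F hF hFS => ?_⟩
            have hF1 : e1 ∉ F := trace_notmem hFS h1 (by simp [h12, h13])
            have hF2 : e2 ∉ F := trace_notmem hFS h2 (by simp [h23])
            have hF3 : e3 ∉ F := trace_notmem hFS h3 (by simp)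
            rcases (h𝒜 F hF).2 with ⟨_, h | h | h⟩ | ⟨_, h, _⟩
            · exact hF1 h
            · exact hF2 h
            · exact hF3 h
            · exact hF1 h
          · -- e2 ∈ S, e3 ∉ S : B = S
            refine ⟨S, Finset.Subset.refl S, fun F hF hFS => ?_⟩
            have hFeq := hfull F hF hFS
            subst hFeq
            rcases (h𝒜 F hF).2 with ⟨h, _⟩ | ⟨_, _, hiff⟩
            · exact h0 h
            · exact h3 (hiff.1 h2)
        · by_cases h3 : e3 ∈ S
          · -- e2 ∉ S, e3 ∈ S : B = S
            refine ⟨S, Finset.Subset.refl S, fun F hF hFS => ?_⟩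
            have hFeq := hfull F hF hFS
            subst hFeq
            rcases (h𝒜 F hF).2 with ⟨h, _⟩ | ⟨_, _, hiff⟩
            · exact h0 h
            · exact h2 (hiff.2 h3)
          · -- e2, e3 ∉ S : B = S.erase e1
            refine ⟨S.erase e1, Finset.erase_subset _ _, fun F hF hFS => ?_⟩
            have hF1 : e1 ∉ F := trace_notmem hFS h1 (by simp)
            rcases (h𝒜 F hF).2 with ⟨hF0, hor⟩ | ⟨_, h, _⟩
            · have hsub : insert e0 (S.erase e1) ⊆ F := by
                intro x hx
                rcases Finset.mem_insert.1 hx with rfl | hx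
                · exact hF0
                · exact trace_mem hFS hx
              have hcard : (insert e0 (S.erase e1)).card = d + 1 := by
                rw [Finset.card_insert_of_notMem (fun h => h0 (Finset.mem_of_mem_erase h)),
                  Finset.card_erase_of_mem h1, hS]
                omega
              have hFeq : F = insert e0 (S.erase e1) :=
                (Finset.eq_of_subset_of_card_le hsub (by rw [(h𝒜 F hF).1, hcard])).symm
              rcases hor with h | h | h
              · exact hF1 h
              · rw [hFeq] at h
                rcases Finset.mem_insert.1 h with h | h
                · exact h02 h.symm
                · exact h2 (Finset.mem_of_mem_erase h)
              · rw [hFeq] at h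
                rcases Finset.mem_insert.1 h with h | h
                · exact h03 h.symm
                · exact h3 (Finset.mem_of_mem_erase h)
            · exact hF1 h
      · -- e0, e1 ∉ S : B = S
        refine ⟨S, Finset.Subset.refl S, fun F hF hFS => ?_⟩
        have hFeq := hfull F hF hFS
        subst hFeq
        rcases (h𝒜 F hF).2 with ⟨h, _⟩ | ⟨_, h, _⟩
        · exact h0 h
        · exact h1 h
  · -- cardinality
    have hinj0 : ∀ t : Finset (Finset (Fin n)), (∀ G ∈ t, e0 ∉ G) →
        Set.InjOn (insert e0) (t : Set (Finset (Fin n))) := by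
      intro t ht G hG G' hG' h
      rw [← Finset.erase_insert (ht G (Finset.mem_coe.1 hG)), h,
        Finset.erase_insert (ht G' (Finset.mem_coe.1 hG'))]
    have hStarcard : Star.card = (n - 1).choose d := by
      rw [hStarDef, Finset.card_image_of_injOn
        (hinj0 _ (fun G hG h => (Finset.mem_erase.1 ((Finset.mem_powersetCard.1 hG).1 h)).1 rfl)),
        Finset.card_powersetCard, Finset.card_erase_of_mem (Finset.mem_univ e0),
        Finset.card_univ, Fintype.card_fin]
    have hRfcard : Rf.card = (n - 4).choose d := by
      rw [hRfDef, Finset.card_image_of_injOn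
        (hinj0 _ (fun G hG h => ((hMmem e0).1 ((Finset.mem_powersetCard.1 hG).1 h)).1 rfl)),
        Finset.card_powersetCard, hMcard]
    have hBfcard : Bf.card = (n - 4).choose d := by
      have hinj1 : Set.InjOn (insert e1) (Finset.powersetCard d M : Set (Finset (Fin n))) := by
        intro G hG G' hG' h
        have e1G : e1 ∉ G := fun hh => ((hMmem e1).1 ((Finset.mem_powersetCard.1 (Finset.mem_coe.1 hG)).1 hh)).2.1 rfl
        have e1G' : e1 ∉ G' := fun hh => ((hMmem e1).1 ((Finset.mem_powersetCard.1 (Finset.mem_coe.1 hG')).1 hh)).2.1 rfl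
        rw [← Finset.erase_insert e1G, h, Finset.erase_insert e1G']
      rw [hBfDef, Finset.card_image_of_injOn hinj1, Finset.card_powersetCard, hMcard]
    have hCfcard : Cf.card = (n - 4).choose (d - 2) := by
      have hinjC : Set.InjOn (fun D : Finset (Fin n) => insert e1 (insert e2 (insert e3 D)))
          (Finset.powersetCard (d - 2) M : Set (Finset (Fin n))) := by
        intro G hG G' hG' h
        simp only at h
        have hGM := (Finset.mem_powersetCard.1 (Finset.mem_coe.1 hG)).1
        have hG'M := (Finset.mem_powersetCard.1 (Finset.mem_coe.1 hG')).1
        have k : ∀ H : Finset (Fin n), (H ⊆ M) →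
            (((insert e1 (insert e2 (insert e3 H))).erase e1).erase e2).erase e3 = H := by
          intro H hH
          have n1 : e1 ∉ insert e2 (insert e3 H) := by
            simp only [Finset.mem_insert]
            push_neg
            exact ⟨h12, h13, fun hh => ((hMmem e1).1 (hH hh)).2.1 rfl⟩
          have n2 : e2 ∉ insert e3 H := by
            simp only [Finset.mem_insert]
            push_neg
            exact ⟨h23, fun hh => ((hMmem e2).1 (hH hh)).2.2.1 rfl⟩
          have n3 : e3 ∉ H := fun hh => ((hMmem e3).1 (hH hh)).2.2.2 rfl
          rw [Finset.erase_insert n1, Finset.erase_insert n2, Finset.erase_insert n3]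
        rw [← k G hGM, h, k G' hG'M]
      rw [hCfDef, Finset.card_image_of_injOn hinjC, Finset.card_powersetCard, hMcard]
    have hRsub : Rf ⊆ Star := by
      intro F hF
      obtain ⟨hc, h0, _⟩ := (hRf F).1 hF
      exact (hStar F).2 ⟨hc, h0⟩
    have hRle : Rf.card ≤ Star.card := Finset.card_le_card hRsub
    have hd1 : Disjoint ((Star \ Rf) ∪ Bf) Cf := by
      rw [Finset.disjoint_left]
      intro F hF hFC
      obtain ⟨_, hC0, _, hC2, _⟩ := (hCf F).1 hFC
      rcases Finset.mem_union.1 hF with hF | hF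
      · exact hC0 ((hStar F).1 (Finset.mem_sdiff.1 hF).1).2
      · exact ((hBf F).1 hF).2.2.2.1 hC2
    have hd2 : Disjoint (Star \ Rf) Bf := by
      rw [Finset.disjoint_left]
      intro F hF hFB
      exact ((hBf F).1 hFB).2.2.1 ((hStar F).1 (Finset.mem_sdiff.1 hF).1).2
    rw [h𝒜Def, Finset.card_union_of_disjoint hd1, Finset.card_union_of_disjoint hd2,
      Finset.card_sdiff_of_subset hRsub, hStarcard, hRfcard, hBfcard, hCfcard]
    omega
end

section
/- Let the characteristic-vector evaluation be defined as usual. For sets F, Y ∈ binom([n], d+1) and Z ⊊ Y, define y_{Y,Z}(x) = ∏_{j∈Z} x_j · ∏_{j∈Y∖Z} (x_j − 1) − ∏_{j∈Y} x_j. Then y_{Y,Z} has total degree at most d, y_{Y,Z}(v_Y) = −1, and for any set F ⊆ [n], y_{Y,Z}(v_F) = (−1)^{|Y| − |Z|} if F ∩ Y = Z, and y_{Y,Z}(v_F) = 0 if F ∩ Y ≠ Z and Y ⊄ F. -/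
open MvPolynomial

/-- characteristic vector of a finite set -/
def charVec {n : ℕ} (A : Finset (Fin n)) : Fin n → ℝ := fun j => if j ∈ A then 1 else 0

private lemma degAux {n : ℕ} (s : Finset (Fin n)) (hs : s.Nonempty) :
    ((∏ j ∈ s, (X j - 1 : MvPolynomial (Fin n) ℝ)) - ∏ j ∈ s, X j).totalDegree ≤ s.card - 1 := by
  induction s using Finset.cons_induction with
  | empty => exact absurd hs (by simp)
  | cons a t ha IH =>
    rcases t.eq_empty_or_nonempty with rfl | ht
    · have h1 : (∏ j ∈ Finset.cons a ∅ ha, (X j - 1 : MvPolynomial (Fin n) ℝ)) -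
        ∏ j ∈ Finset.cons a ∅ ha, X j = C (-1) := by
        simp [Finset.prod_cons]
      rw [h1]
      simp [totalDegree_C]
    · have hQ : (∏ j ∈ t, (X j - 1 : MvPolynomial (Fin n) ℝ)).totalDegree ≤ t.card := by
        calc (∏ j ∈ t, (X j - 1 : MvPolynomial (Fin n) ℝ)).totalDegree
            ≤ ∑ j ∈ t, (X j - 1 : MvPolynomial (Fin n) ℝ).totalDegree :=
              totalDegree_finset_prod t _
          _ ≤ ∑ _j ∈ t, 1 := Finset.sum_le_sum (fun j _ => by
              calc (X j - 1 : MvPolynomial (Fin n) ℝ).totalDegree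
                  ≤ (X j : MvPolynomial (Fin n) ℝ).totalDegree ⊔ (1 : MvPolynomial (Fin n) ℝ).totalDegree :=
                    totalDegree_sub _ _
                _ ≤ 1 := by simp [totalDegree_X])
          _ = t.card := by simp
      have key : (∏ j ∈ Finset.cons a t ha, (X j - 1 : MvPolynomial (Fin n) ℝ)) -
          ∏ j ∈ Finset.cons a t ha, X j =
          X a * ((∏ j ∈ t, (X j - 1 : MvPolynomial (Fin n) ℝ)) - ∏ j ∈ t, X j)
            - ∏ j ∈ t, (X j - 1 : MvPolynomial (Fin n) ℝ) := by
        rw [Finset.prod_cons, Finset.prod_cons]; ring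
      rw [key]
      have h2 : (X a * ((∏ j ∈ t, (X j - 1 : MvPolynomial (Fin n) ℝ)) - ∏ j ∈ t, X j)).totalDegree
          ≤ 1 + (t.card - 1) :=
        le_trans (totalDegree_mul _ _) (add_le_add (by simp [totalDegree_X]) (IH ht))
      have h3 := totalDegree_sub
        (X a * ((∏ j ∈ t, (X j - 1 : MvPolynomial (Fin n) ℝ)) - ∏ j ∈ t, X j))
        (∏ j ∈ t, (X j - 1 : MvPolynomial (Fin n) ℝ))
      have htc : 1 ≤ t.card := Finset.card_pos.mpr ht
      have : Finset.card (Finset.cons a t ha) = t.card + 1 := Finset.card_cons ha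
      refine le_trans h3 ?_
      rw [this]
      simp only [sup_le_iff]
      omega

theorem stmt_9 (n d : ℕ) (Y Z : Finset (Fin n)) (hY : Y.card = d + 1) (hZ : Z ⊂ Y)
    (y : MvPolynomial (Fin n) ℝ)
    (hy : y = (∏ j ∈ Z, X j) * (∏ j ∈ Y \ Z, (X j - 1)) - ∏ j ∈ Y, X j) :
    y.totalDegree ≤ d ∧
    eval (charVec Y) y = -1 ∧
    (∀ F : Finset (Fin n),
      (F ∩ Y = Z → eval (charVec F) y = (-1) ^ (Y.card - Z.card)) ∧
      (F ∩ Y ≠ Z → ¬ Y ⊆ F → eval (charVec F) y = 0)) := by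
  have hZY : Z ⊆ Y := hZ.1
  have hne : (Y \ Z).Nonempty := Finset.sdiff_nonempty.mpr hZ.2
  have hZcard : Z.card < Y.card := Finset.card_lt_card hZ
  constructor
  · -- degree bound
    have hsplit : (∏ j ∈ Y, (X j : MvPolynomial (Fin n) ℝ)) =
        (∏ j ∈ Y \ Z, X j) * ∏ j ∈ Z, X j := (Finset.prod_sdiff hZY).symm
    have hy2 : y = (∏ j ∈ Z, (X j : MvPolynomial (Fin n) ℝ)) *
        ((∏ j ∈ Y \ Z, (X j - 1)) - ∏ j ∈ Y \ Z, X j) := by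
      rw [hy, hsplit]; ring
    have hP : (∏ j ∈ Z, (X j : MvPolynomial (Fin n) ℝ)).totalDegree ≤ Z.card := by
      calc (∏ j ∈ Z, (X j : MvPolynomial (Fin n) ℝ)).totalDegree
          ≤ ∑ j ∈ Z, (X j : MvPolynomial (Fin n) ℝ).totalDegree := totalDegree_finset_prod Z _
        _ = Z.card := by simp [totalDegree_X]
    have hQ := degAux (Y \ Z) hne
    have hcard : (Y \ Z).card = Y.card - Z.card := Finset.card_sdiff_of_subset hZY
    rw [hy2]
    refine le_trans (totalDegree_mul _ _) ?_
    have := add_le_add hP hQ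
    omega
  constructor
  · -- eval at charVec Y
    obtain ⟨j0, hj0⟩ := hne
    rw [hy]
    simp only [map_sub, map_mul, map_prod, eval_X, eval_sub, map_one]
    have e1 : ∏ j ∈ Z, charVec Y j = 1 := Finset.prod_eq_one (fun j hj => by
      simp [charVec, hZY hj])
    have e2 : ∏ j ∈ Y \ Z, (charVec Y j - 1) = 0 := Finset.prod_eq_zero hj0 (by
      simp [charVec, (Finset.mem_sdiff.mp hj0).1])
    have e3 : ∏ j ∈ Y, charVec Y j = 1 := Finset.prod_eq_one (fun j hj => by simp [charVec, hj])
    rw [e1, e2, e3]; ring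
  · intro F
    constructor
    · -- F ∩ Y = Z
      intro hF
      have hZF : Z ⊆ F := by rw [← hF]; exact Finset.inter_subset_left
      obtain ⟨j0, hj0⟩ := hne
      have hj0Y := (Finset.mem_sdiff.mp hj0).1
      have hj0F : j0 ∉ F := fun h => (Finset.mem_sdiff.mp hj0).2
        (hF ▸ Finset.mem_inter.mpr ⟨h, hj0Y⟩)
      rw [hy]
      simp only [map_sub, map_mul, map_prod, eval_X, eval_sub, map_one]
      have e1 : ∏ j ∈ Z, charVec F j = 1 := Finset.prod_eq_one (fun j hj => by
        simp [charVec, hZF hj])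
      have e2 : ∏ j ∈ Y \ Z, (charVec F j - 1) = (-1) ^ (Y.card - Z.card) := by
        rw [Finset.prod_congr rfl (fun j hj => ?_), Finset.prod_const,
          Finset.card_sdiff_of_subset hZY]
        · have hjF : j ∉ F := fun h => (Finset.mem_sdiff.mp hj).2
            (hF ▸ Finset.mem_inter.mpr ⟨h, (Finset.mem_sdiff.mp hj).1⟩)
          simp [charVec, hjF]
      have e3 : ∏ j ∈ Y, charVec F j = 0 := Finset.prod_eq_zero hj0Y (by
        simp [charVec, hj0F])
      rw [e1, e2, e3]; ring
    · -- F ∩ Y ≠ Z, ¬ Y ⊆ F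
      intro hF hYF
      obtain ⟨j1, hj1Y, hj1F⟩ := Finset.not_subset.mp hYF
      rw [hy]
      simp only [map_sub, map_mul, map_prod, eval_X, eval_sub, map_one]
      have e3 : ∏ j ∈ Y, charVec F j = 0 := Finset.prod_eq_zero hj1Y (by
        simp [charVec, hj1F])
      have e12 : (∏ j ∈ Z, charVec F j) * ∏ j ∈ Y \ Z, (charVec F j - 1) = 0 := by
        by_cases hZF : Z ⊆ F
        · -- exists j ∈ F ∩ Y, j ∉ Z
          have : ¬ (F ∩ Y ⊆ Z) := by
            intro h
            exact hF (Finset.Subset.antisymm h (Finset.subset_inter hZF hZY))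
          obtain ⟨j2, hj2, hj2Z⟩ := Finset.not_subset.mp this
          have hj2F := (Finset.mem_inter.mp hj2).1
          have hj2Y := (Finset.mem_inter.mp hj2).2
          have : ∏ j ∈ Y \ Z, (charVec F j - 1) = 0 :=
            Finset.prod_eq_zero (Finset.mem_sdiff.mpr ⟨hj2Y, hj2Z⟩) (by simp [charVec, hj2F])
          rw [this, mul_zero]
        · obtain ⟨j3, hj3Z, hj3F⟩ := Finset.not_subset.mp hZF
          have : ∏ j ∈ Z, charVec F j = 0 :=
            Finset.prod_eq_zero hj3Z (by simp [charVec, hj3F])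
          rw [this, zero_mul]
      rw [e3, e12]; ring
end

section
/- The polynomials h_H(x) = (∑_{j=1}^n x_j − d − 1) · ∏_{j∈H} x_j, indexed by all subsets H ⊆ [n] with |H| ≤ d−1, evaluate to a nonzero value at the characteristic vector v_H (since |H| ≤ d−1 < d+1) and satisfy h_{H'}(v_H) = 0 whenever |H| ≤ |H'| and H' ≠ H; consequently they are linearly independent in ℝ[x_1,...,x_n]. -/
open MvPolynomial

lemma eval_h_aux {n : ℕ} (d : ℕ) (H A : Finset (Fin n)) :
    eval (charVec A) (((∑ j : Fin n, X j) - C ((d : ℝ) + 1)) * ∏ j ∈ H, X j)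
      = ((A.card : ℝ) - ((d : ℝ) + 1)) * (if H ⊆ A then 1 else 0) := by
  simp only [map_mul, map_sub, map_sum, eval_C, eval_X, map_prod, charVec]
  congr 1
  · congr 1
    rw [Finset.sum_boole]
    simp [Finset.filter_mem_eq_inter]
  · rw [Finset.prod_boole]
    simp [Finset.subset_iff]

lemma card_ne {d c : ℕ} (hc : c ≤ d - 1) : (c : ℝ) - ((d : ℝ) + 1) ≠ 0 := by
  have : c < d + 1 := lt_of_le_of_lt (le_trans hc (Nat.sub_le d 1)) (Nat.lt_succ_self d)
  have : (c : ℝ) < (d : ℝ) + 1 := by exact_mod_cast this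
  linarith

theorem stmt_10 (n d : ℕ)
    (h : Finset (Fin n) → MvPolynomial (Fin n) ℝ)
    (hh : ∀ H : Finset (Fin n),
      h H = ((∑ j : Fin n, X j) - C ((d : ℝ) + 1)) * ∏ j ∈ H, X j) :
    (∀ H : Finset (Fin n), H.card ≤ d - 1 → eval (charVec H) (h H) ≠ 0) ∧
    (∀ H H' : Finset (Fin n), H.card ≤ d - 1 → H'.card ≤ d - 1 →
      H.card ≤ H'.card → H' ≠ H → eval (charVec H) (h H') = 0) ∧
    LinearIndependent ℝ
      (fun H : {H : Finset (Fin n) // H.card ≤ d - 1} => h H.val) := by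
  have key : ∀ H H' : Finset (Fin n),
      eval (charVec H) (h H') = ((H.card : ℝ) - ((d : ℝ) + 1)) * (if H' ⊆ H then 1 else 0) := by
    intro H H'; rw [hh]; exact eval_h_aux d H' H
  have part1 : ∀ H : Finset (Fin n), H.card ≤ d - 1 → eval (charVec H) (h H) ≠ 0 := by
    intro H hH
    rw [key, if_pos (subset_refl H), mul_one]
    exact card_ne hH
  have part2 : ∀ H H' : Finset (Fin n), H.card ≤ d - 1 → H'.card ≤ d - 1 →
      H.card ≤ H'.card → H' ≠ H → eval (charVec H) (h H') = 0 := by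
    intro H H' _ _ hle hne
    rw [key, if_neg, mul_zero]
    intro hsub
    exact hne (Finset.eq_of_subset_of_card_le hsub hle)
  refine ⟨part1, part2, ?_⟩
  rw [linearIndependent_iff']
  intro s g hsum i hi
  induction s using Finset.strongInduction generalizing g with
  | _ s ih =>
    obtain ⟨i₀, hi₀, hmin⟩ := s.exists_min_image (fun j => j.val.card) ⟨i, hi⟩
    have hg0 : g i₀ = 0 := by
      have := congrArg (eval (charVec i₀.val)) hsum
      rw [map_sum, map_zero] at this
      rw [Finset.sum_eq_single i₀ (fun j hj hne => ?_) (fun hni => absurd hi₀ hni)] at this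
      · rw [smul_eq_C_mul, map_mul, eval_C] at this
        exact (mul_eq_zero.mp this).resolve_right (part1 i₀.val i₀.2)
      · rw [smul_eq_C_mul, map_mul, eval_C,
          part2 i₀.val j.val i₀.2 j.2 (hmin j hj) (fun hv => hne (Subtype.ext hv)), mul_zero]
    by_cases hii : i = i₀
    · rw [hii]; exact hg0
    · have hsum' : ∑ j ∈ s.erase i₀, g j • h j.val = 0 := by
        rw [Finset.sum_erase_eq_sub hi₀, hsum, hg0, zero_smul, sub_zero]
      exact ih (s.erase i₀) (Finset.erase_ssubset hi₀) g hsum' (Finset.mem_erase.mpr ⟨hii, hi⟩)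
end

section
/- Let n ≥ 2d+2 and d ≥ 1. There is no family F = {F_1, ..., F_m} ⊆ binom([n], d+1) with |F| = C(n, d), together with a choice of subsets B_i ⊆ F_i for each i, satisfying both: (1) for each Y ∈ binom([n], d+1) ∖ F and each proper subset Z ⊊ Y there is exactly one index i with F_i ∩ Y = Z = B_i; and (2) F_i ∩ F_j ≠ B_i for all i, j. -/
private theorem stmt_14_aux (n e : ℕ) (hn : 2 * e + 4 ≤ n)
    (m : ℕ) (F B : Fin m → Finset (Fin n))
    (hFinj : Function.Injective F)
    (hFcard : ∀ i, (F i).card = e + 2)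
    (hBF : ∀ i, B i ⊆ F i)
    (hm : m = n.choose (e + 1))
    (hserve : ∀ Y : Finset (Fin n), Y.card = e + 2 → (∀ i, Y ≠ F i) →
        ∀ Z ⊂ Y, ∃! i, F i ∩ Y = Z ∧ B i = Z)
    (hint : ∀ i j, F i ∩ F j ≠ B i)
    (𝒴 : Finset (Finset (Fin n)))
    (mem𝒴 : ∀ Y : Finset (Fin n), Y ∈ 𝒴 ↔ Y.card = e + 2 ∧ ∀ i, Y ≠ F i) : False := by
  classical
  set N := n - e - 2 with hNdef
  have hN2 : 2 ≤ N := by omega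
  -- Key lemma K1
  have K1 : ∀ Z : Finset (Fin n), Z.card = e + 1 → ∀ Y₁ ∈ 𝒴, Z ⊆ Y₁ →
      ∃ w, w ∉ Z ∧ (∃ j, insert w Z = F j) ∧
        ∀ x, x ∉ Z → x ≠ w → insert x Z ∈ 𝒴 := by
    intro Z hZcard Y₁ hY₁ hZY₁
    obtain ⟨hY₁card, hY₁nm⟩ := (mem𝒴 Y₁).1 hY₁
    have hZss : Z ⊂ Y₁ := by
      refine hZY₁.ssubset_of_ne ?_
      intro h; rw [h, hY₁card] at hZcard; omega
    obtain ⟨i, ⟨hFiY, hBi⟩, -⟩ := hserve Y₁ hY₁card hY₁nm Z hZss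
    have hZFi : Z ⊆ F i := by rw [← hFiY]; exact Finset.inter_subset_left
    have hsd : (F i \ Z).card = 1 := by
      rw [Finset.card_sdiff_of_subset hZFi, hFcard, hZcard]
      omega
    obtain ⟨w, hw⟩ := Finset.card_eq_one.1 hsd
    have hwZ : w ∉ Z := by
      have : w ∈ F i \ Z := by rw [hw]; exact Finset.mem_singleton_self w
      exact (Finset.mem_sdiff.1 this).2
    have hFiw : F i = insert w Z := by
      rw [Finset.insert_eq, ← hw]
      exact (Finset.sdiff_union_of_subset hZFi).symm
    refine ⟨w, hwZ, ⟨i, hFiw.symm⟩, ?_⟩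
    intro x hxZ hxw
    rw [mem𝒴]
    constructor
    · rw [Finset.card_insert_of_notMem hxZ, hZcard]
    · intro j hj
      apply hint i j
      rw [hFiw, ← hj, hBi]
      ext a
      simp only [Finset.mem_inter, Finset.mem_insert]
      constructor
      · rintro ⟨h1 | h1, h2 | h2⟩
        · exact absurd (h2.symm.trans h1) hxw
        · exact h2
        · exact h1
        · exact h1
      · intro ha; exact ⟨Or.inr ha, Or.inr ha⟩
  -- K1 counting version
  have K1c : ∀ Z : Finset (Fin n), Z.card = e + 1 → ∀ Y₁ ∈ 𝒴, Z ⊆ Y₁ →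
      (𝒴.filter (fun Y => Z ⊆ Y)).card = N := by
    intro Z hZcard Y₁ hY₁ hZY₁
    obtain ⟨w, hwZ, ⟨j, hjF⟩, hins⟩ := K1 Z hZcard Y₁ hY₁ hZY₁
    have hcompl : ((insert w Z)ᶜ : Finset (Fin n)).card = N := by
      rw [Finset.card_compl, Finset.card_insert_of_notMem hwZ, hZcard]
      simp only [Fintype.card_fin]
      omega
    have hbij : ((insert w Z)ᶜ : Finset (Fin n)).card
        = (𝒴.filter (fun Y => Z ⊆ Y)).card := by
      refine Finset.card_bij (fun x _ => insert x Z) ?_ ?_ ?_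
      · intro x hx
        rw [Finset.mem_compl, Finset.mem_insert, not_or] at hx
        rw [Finset.mem_filter]
        exact ⟨hins x hx.2 hx.1, Finset.subset_insert _ _⟩
      · intro x hx x' hx' hEq
        rw [Finset.mem_compl, Finset.mem_insert, not_or] at hx hx'
        have hEq' : insert x Z = insert x' Z := hEq
        have : x ∈ insert x' Z := hEq' ▸ Finset.mem_insert_self x Z
        rcases Finset.mem_insert.1 this with h | h
        · exact h
        · exact absurd h hx.2
      · intro Y hY
        rw [Finset.mem_filter] at hY
        obtain ⟨hY𝒴, hZY⟩ := hY
        obtain ⟨hYcard, hYnm⟩ := (mem𝒴 Y).1 hY𝒴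
        have h1 : (Y \ Z).card = 1 := by
          rw [Finset.card_sdiff_of_subset hZY, hYcard, hZcard]
          omega
        obtain ⟨x, hx⟩ := Finset.card_eq_one.1 h1
        have hxY : x ∈ Y \ Z := hx ▸ Finset.mem_singleton_self x
        rw [Finset.mem_sdiff] at hxY
        have hYx : Y = insert x Z := by
          rw [Finset.insert_eq, ← hx]
          exact (Finset.sdiff_union_of_subset hZY).symm
        have hxw : x ≠ w := fun h => hYnm j (by rw [hYx, h, hjF])
        refine ⟨x, ?_, hYx.symm⟩
        rw [Finset.mem_compl, Finset.mem_insert, not_or]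
        exact ⟨hxw, hxY.2⟩
    rw [← hbij]
    exact hcompl
  -- complement cards
  have hFcompl : ∀ i, ((F i)ᶜ : Finset (Fin n)).card = N := by
    intro i
    rw [Finset.card_compl, hFcard]
    simp only [Fintype.card_fin]
    omega
  -- strict monotonicity of choose
  have hchoose_lt : n.choose (e + 1) < n.choose (e + 2) := by
    have h1 : n.choose (e + 2) * (e + 2) = n.choose (e + 1) * (n - (e + 1)) :=
      Nat.choose_succ_right_eq n (e + 1)
    have hpos : 0 < n.choose (e + 1) := Nat.choose_pos (by omega)
    have h2 : n.choose (e + 1) * (e + 2) < n.choose (e + 2) * (e + 2) := by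
      rw [h1]
      exact Nat.mul_lt_mul_of_pos_left (by omega) hpos
    exact lt_of_mul_lt_mul_right h2 (Nat.zero_le _)
  -- 𝒴 is nonempty
  have h𝒴ne : ∃ Y : Finset (Fin n), Y.card = e + 2 ∧ ∀ i, Y ≠ F i := by
    by_contra hc
    push_neg at hc
    have hsub : Finset.powersetCard (e + 2) (Finset.univ : Finset (Fin n))
        ⊆ Finset.univ.image F := by
      intro Y hY
      rw [Finset.mem_powersetCard] at hY
      obtain ⟨i, hi⟩ := hc Y hY.2
      exact Finset.mem_image.2 ⟨i, Finset.mem_univ i, hi.symm⟩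
    have hcard := Finset.card_le_card hsub
    rw [Finset.card_powersetCard, Finset.card_univ, Fintype.card_fin] at hcard
    have himg : (Finset.univ.image F).card ≤ m := by
      refine le_trans Finset.card_image_le ?_
      rw [Finset.card_univ, Fintype.card_fin]
    omega
  obtain ⟨Y₀, hY₀card, hY₀nm⟩ := h𝒴ne
  have hY₀𝒴 : Y₀ ∈ 𝒴 := (mem𝒴 Y₀).2 ⟨hY₀card, hY₀nm⟩
  obtain ⟨W, hWY₀, hWcard⟩ := Finset.exists_subset_card_eq
    (show e ≤ Y₀.card by omega)
  set S : Finset (Fin m) := Finset.univ.filter (fun i => B i = W) with hSdef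
  set 𝒲 : Finset (Finset (Fin n)) := 𝒴.filter (fun Y => W ⊆ Y) with h𝒲def
  set P : Fin m → Finset (Finset (Fin n)) :=
    fun i => 𝒲.filter (fun Y => F i ∩ Y = W) with hPdef
  have serveW : ∀ Y ∈ 𝒲, ∃! i, F i ∩ Y = W ∧ B i = W := by
    intro Y hY
    rw [h𝒲def, Finset.mem_filter] at hY
    obtain ⟨hY𝒴, hWY⟩ := hY
    obtain ⟨hYcard, hYnm⟩ := (mem𝒴 Y).1 hY𝒴
    refine hserve Y hYcard hYnm W (hWY.ssubset_of_ne ?_)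
    intro h
    rw [h, hYcard] at hWcard
    omega
  have hYmem : ∀ i ∈ S, ∀ p : Finset (Fin n), p ⊆ (F i)ᶜ → p.card = 2 →
      W ∪ p ∈ P i := by
    intro i hiS p hpF hp2
    rw [hSdef, Finset.mem_filter] at hiS
    have hBiW : B i = W := hiS.2
    have hWFi : W ⊆ F i := hBiW ▸ hBF i
    have hdisj : Disjoint W p := by
      rw [Finset.disjoint_left]
      intro a haW hap
      exact (Finset.mem_compl.1 (hpF hap)) (hWFi haW)
    have hcap : F i ∩ (W ∪ p) = W := by
      ext a
      simp only [Finset.mem_inter, Finset.mem_union]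
      constructor
      · rintro ⟨haF, haW | hap⟩
        · exact haW
        · exact absurd haF (Finset.mem_compl.1 (hpF hap))
      · intro h
        exact ⟨hWFi h, Or.inl h⟩
    have hcardWp : (W ∪ p).card = e + 2 := by
      rw [Finset.card_union_of_disjoint hdisj, hWcard, hp2]
    have hnm : ∀ j, W ∪ p ≠ F j := by
      intro j hj
      exact hint i j (by rw [← hj, hcap, hBiW])
    rw [hPdef, Finset.mem_filter]
    refine ⟨?_, hcap⟩
    rw [h𝒲def, Finset.mem_filter]
    exact ⟨(mem𝒴 _).2 ⟨hcardWp, hnm⟩, Finset.subset_union_left⟩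
  have cardP : ∀ i ∈ S, (P i).card = N.choose 2 := by
    intro i hiS
    have hBiW : B i = W := by
      have h := hiS
      rw [hSdef, Finset.mem_filter] at h
      exact h.2
    have hWFi : W ⊆ F i := hBiW ▸ hBF i
    have hbij : (Finset.powersetCard 2 ((F i)ᶜ : Finset (Fin n))).card = (P i).card := by
      refine Finset.card_bij (fun p _ => W ∪ p) ?_ ?_ ?_
      · intro p hp
        rw [Finset.mem_powersetCard] at hp
        exact hYmem i hiS p hp.1 hp.2
      · intro p hp p' hp' hEq
        rw [Finset.mem_powersetCard] at hp hp'
        have hEq' : W ∪ p = W ∪ p' := hEq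
        have hd : Disjoint W p := by
          rw [Finset.disjoint_left]
          intro a haW hap
          exact (Finset.mem_compl.1 (hp.1 hap)) (hWFi haW)
        have hd' : Disjoint W p' := by
          rw [Finset.disjoint_left]
          intro a haW hap
          exact (Finset.mem_compl.1 (hp'.1 hap)) (hWFi haW)
        rw [← Finset.union_sdiff_cancel_left hd, hEq', Finset.union_sdiff_cancel_left hd']
      · intro Y hY
        rw [hPdef, Finset.mem_filter] at hY
        obtain ⟨hY𝒲, hcap⟩ := hY
        rw [h𝒲def, Finset.mem_filter] at hY𝒲
        obtain ⟨hY𝒴, hWY⟩ := hY𝒲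
        obtain ⟨hYcard, hYnm⟩ := (mem𝒴 Y).1 hY𝒴
        refine ⟨Y \ W, ?_, Finset.union_sdiff_of_subset hWY⟩
        rw [Finset.mem_powersetCard]
        constructor
        · intro a ha
          rw [Finset.mem_sdiff] at ha
          rw [Finset.mem_compl]
          intro haF
          exact ha.2 (hcap ▸ Finset.mem_inter.2 ⟨haF, ha.1⟩)
        · rw [Finset.card_sdiff_of_subset hWY, hYcard, hWcard]
          omega
    rw [← hbij, Finset.card_powersetCard, hFcompl i]
  have h𝒲eq : 𝒲 = S.biUnion P := by
    ext Y
    constructor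
    · intro hY
      obtain ⟨i, ⟨hcap, hBi⟩, -⟩ := serveW Y hY
      refine Finset.mem_biUnion.2 ⟨i, ?_, ?_⟩
      · rw [hSdef, Finset.mem_filter]
        exact ⟨Finset.mem_univ i, hBi⟩
      · rw [hPdef, Finset.mem_filter]
        exact ⟨hY, hcap⟩
    · intro hY
      obtain ⟨i, hiS, hYP⟩ := Finset.mem_biUnion.1 hY
      rw [hPdef, Finset.mem_filter] at hYP
      exact hYP.1
  have hdisjP : ∀ i ∈ S, ∀ j ∈ S, i ≠ j → Disjoint (P i) (P j) := by
    intro i hi j hj hij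
    rw [Finset.disjoint_left]
    intro Y hYi hYj
    rw [hPdef, Finset.mem_filter] at hYi hYj
    obtain ⟨k, -, huniq⟩ := serveW Y hYi.1
    have hBi : B i = W := by
      have h := hi
      rw [hSdef, Finset.mem_filter] at h
      exact h.2
    have hBj : B j = W := by
      have h := hj
      rw [hSdef, Finset.mem_filter] at h
      exact h.2
    exact hij ((huniq i ⟨hYi.2, hBi⟩).trans (huniq j ⟨hYj.2, hBj⟩).symm)
  have card𝒲 : 𝒲.card = S.card * N.choose 2 := by
    rw [h𝒲eq, Finset.card_biUnion hdisjP, Finset.sum_congr rfl cardP,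
      Finset.sum_const, smul_eq_mul]
  set T : Finset (Fin n) := S.biUnion (fun i => (F i)ᶜ) with hTdef
  have hTW : ∀ x ∈ T, x ∉ W := by
    intro x hx hxW
    rw [hTdef] at hx
    obtain ⟨i, hiS, hxc⟩ := Finset.mem_biUnion.1 hx
    have hBiW : B i = W := by
      have h := hiS
      rw [hSdef, Finset.mem_filter] at h
      exact h.2
    exact (Finset.mem_compl.1 hxc) ((hBiW ▸ hBF i) hxW)
  have colcount : ∀ x ∈ T, (𝒲.filter (fun Y => x ∈ Y)).card = N := by
    intro x hx
    rw [hTdef] at hx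
    obtain ⟨i, hiS, hxc⟩ := Finset.mem_biUnion.1 hx
    have hBiW : B i = W := by
      have h := hiS
      rw [hSdef, Finset.mem_filter] at h
      exact h.2
    have hWFi : W ⊆ F i := hBiW ▸ hBF i
    have hxW : x ∉ W := fun h => (Finset.mem_compl.1 hxc) (hWFi h)
    obtain ⟨y, hy, hyx⟩ := Finset.exists_mem_ne
      (by rw [hFcompl i]; omega) x
    have hpsub : ({x, y} : Finset (Fin n)) ⊆ (F i)ᶜ := by
      intro a ha
      rcases Finset.mem_insert.1 ha with h | h
      · rwa [h]
      · rwa [Finset.mem_singleton.1 h]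
    have hp2 : ({x, y} : Finset (Fin n)).card = 2 := by
      rw [Finset.card_insert_of_notMem (by simp [hyx.symm]), Finset.card_singleton]
    have hY₁ := hYmem i hiS _ hpsub hp2
    rw [hPdef, Finset.mem_filter] at hY₁
    have hY₁𝒴 : W ∪ {x, y} ∈ 𝒴 := by
      have h := hY₁.1
      rw [h𝒲def, Finset.mem_filter] at h
      exact h.1
    have hZsub : insert x W ⊆ W ∪ {x, y} := by
      intro a ha
      rcases Finset.mem_insert.1 ha with h | h
      · exact Finset.mem_union_right _ (by simp [h])
      · exact Finset.mem_union_left _ h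
    have hZcard : (insert x W).card = e + 1 := by
      rw [Finset.card_insert_of_notMem hxW, hWcard]
    have hfeq : 𝒲.filter (fun Y => x ∈ Y) = 𝒴.filter (fun Y => insert x W ⊆ Y) := by
      ext Y
      rw [h𝒲def, Finset.filter_filter, Finset.mem_filter, Finset.mem_filter]
      constructor
      · rintro ⟨hY𝒴, hWY, hxY⟩
        exact ⟨hY𝒴, Finset.insert_subset hxY hWY⟩
      · rintro ⟨hY𝒴, hins⟩
        rw [Finset.insert_subset_iff] at hins
        exact ⟨hY𝒴, hins.2, hins.1⟩
    rw [hfeq]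
    exact K1c (insert x W) hZcard (W ∪ {x, y}) hY₁𝒴 hZsub
  have hrow : ∀ Y ∈ 𝒲, (T.filter (fun x => x ∈ Y)).card = 2 := by
    intro Y hY
    have hYb : Y ∈ S.biUnion P := h𝒲eq ▸ hY
    obtain ⟨i, hiS, hYP⟩ := Finset.mem_biUnion.1 hYb
    rw [hPdef, Finset.mem_filter] at hYP
    obtain ⟨hY𝒲, hcap⟩ := hYP
    rw [h𝒲def, Finset.mem_filter] at hY𝒲
    obtain ⟨hY𝒴, hWY⟩ := hY𝒲
    have hYcard : Y.card = e + 2 := ((mem𝒴 Y).1 hY𝒴).1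
    have hTY : T.filter (fun x => x ∈ Y) = Y \ W := by
      ext a
      simp only [Finset.mem_filter, Finset.mem_sdiff]
      constructor
      · rintro ⟨haT, haY⟩
        exact ⟨haY, hTW a haT⟩
      · rintro ⟨haY, haW⟩
        refine ⟨?_, haY⟩
        rw [hTdef]
        refine Finset.mem_biUnion.2 ⟨i, hiS, ?_⟩
        rw [Finset.mem_compl]
        intro haF
        exact haW (hcap ▸ Finset.mem_inter.2 ⟨haF, haY⟩)
    rw [hTY, Finset.card_sdiff_of_subset hWY, hYcard, hWcard]
    omega
  have hcount : 2 * 𝒲.card = T.card * N := by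
    have lhs : ∑ Y ∈ 𝒲, (T.filter (fun x => x ∈ Y)).card = 2 * 𝒲.card := by
      rw [Finset.sum_congr rfl hrow, Finset.sum_const, smul_eq_mul, mul_comm]
    have hswap : ∑ Y ∈ 𝒲, (T.filter (fun x => x ∈ Y)).card
        = ∑ x ∈ T, (𝒲.filter (fun Y => x ∈ Y)).card := by
      simp_rw [Finset.card_filter]
      exact Finset.sum_comm
    have rhs : ∑ x ∈ T, (𝒲.filter (fun Y => x ∈ Y)).card = T.card * N := by
      rw [Finset.sum_congr rfl colcount, Finset.sum_const, smul_eq_mul]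
    omega
  have h2c : 2 * N.choose 2 = N * (N - 1) := by
    obtain ⟨k, hk⟩ : ∃ k, N = k + 1 := ⟨N - 1, by omega⟩
    rw [hk, Nat.choose_two_right]
    have hdvd : 2 ∣ (k + 1) * (k + 1 - 1) := by
      simp only [Nat.add_sub_cancel]
      rw [mul_comm]
      exact (Nat.even_mul_succ_self k).two_dvd
    rw [Nat.mul_div_cancel' hdvd]
  have hT : T.card = S.card * (N - 1) := by
    refine Nat.eq_of_mul_eq_mul_right (show 0 < N by omega) ?_
    calc T.card * N = 2 * 𝒲.card := hcount.symm
      _ = 2 * (S.card * N.choose 2) := by rw [card𝒲]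
      _ = S.card * (2 * N.choose 2) := by ring
      _ = S.card * (N * (N - 1)) := by rw [h2c]
      _ = S.card * (N - 1) * N := by ring
  have hSne : S.Nonempty := by
    have hY₀𝒲 : Y₀ ∈ 𝒲 := by
      rw [h𝒲def, Finset.mem_filter]
      exact ⟨hY₀𝒴, hWY₀⟩
    obtain ⟨i, ⟨-, hBi⟩, -⟩ := serveW Y₀ hY₀𝒲
    refine ⟨i, ?_⟩
    rw [hSdef, Finset.mem_filter]
    exact ⟨Finset.mem_univ i, hBi⟩
  have hq1 : S.card ≠ 1 := by
    intro h1
    obtain ⟨i, hi⟩ := Finset.card_eq_one.1 h1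
    have hTeq : T = (F i)ᶜ := by
      rw [hTdef, hi, Finset.singleton_biUnion]
    have := hFcompl i
    rw [← hTeq] at this
    rw [hT, h1] at this
    omega
  have hq2 : S.card ≠ 2 := by
    intro h2
    obtain ⟨i, j, hij, hS⟩ := Finset.card_eq_two.1 h2
    have hiS : i ∈ S := by rw [hS]; simp
    have hjS : j ∈ S := by rw [hS]; simp
    have hTeq : T = (F i)ᶜ ∪ (F j)ᶜ := by
      rw [hTdef, hS, Finset.biUnion_insert, Finset.singleton_biUnion]
    have hui := Finset.card_union_add_card_inter ((F i)ᶜ : Finset (Fin n)) ((F j)ᶜ)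
    rw [hFcompl i, hFcompl j] at hui
    have hle : (((F i)ᶜ ∩ (F j)ᶜ : Finset (Fin n))).card ≤ 1 := by
      by_contra hc
      push_neg at hc
      obtain ⟨x, hxm, y, hym, hxy⟩ := Finset.one_lt_card.1 hc
      have hpx : ({x, y} : Finset (Fin n)) ⊆ (F i)ᶜ := by
        intro a ha
        rcases Finset.mem_insert.1 ha with h | h
        · rw [h]; exact (Finset.mem_inter.1 hxm).1
        · rw [Finset.mem_singleton.1 h]; exact (Finset.mem_inter.1 hym).1
      have hpy : ({x, y} : Finset (Fin n)) ⊆ (F j)ᶜ := by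
        intro a ha
        rcases Finset.mem_insert.1 ha with h | h
        · rw [h]; exact (Finset.mem_inter.1 hxm).2
        · rw [Finset.mem_singleton.1 h]; exact (Finset.mem_inter.1 hym).2
      have hpcard : ({x, y} : Finset (Fin n)).card = 2 := by
        rw [Finset.card_insert_of_notMem (by simp [hxy]), Finset.card_singleton]
      have hYi := hYmem i hiS _ hpx hpcard
      have hYj := hYmem j hjS _ hpy hpcard
      exact (Finset.disjoint_left.1 (hdisjP i hiS j hjS hij) hYi) hYj
    have hTcard : T.card = 2 * (N - 1) := by rw [hT, h2]
    rw [hTeq] at hTcard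
    omega
  have hq3 : 3 ≤ S.card := by
    have := Finset.card_pos.2 hSne
    omega
  have hTle : T.card ≤ n - e := by
    have hsub : T ⊆ Wᶜ := fun x hx => Finset.mem_compl.2 (hTW x hx)
    have := Finset.card_le_card hsub
    rwa [Finset.card_compl, hWcard, Fintype.card_fin] at this
  have hmul : 3 * (N - 1) ≤ S.card * (N - 1) := Nat.mul_le_mul_right _ hq3
  have hN2' : N = 2 := by omega
  have he0 : e = 0 := by omega
  have hn4 : n = 4 := by omega
  -- final contradiction by counting members + nonmembers
  have hdisj𝒴 : Disjoint 𝒴 (Finset.univ.image F) := by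
    rw [Finset.disjoint_left]
    intro Y hY hYim
    obtain ⟨i, -, hi⟩ := Finset.mem_image.1 hYim
    exact ((mem𝒴 Y).1 hY).2 i hi.symm
  have hsubP : 𝒴 ∪ Finset.univ.image F ⊆ Finset.powersetCard (e + 2) (Finset.univ : Finset (Fin n)) := by
    intro Y hY
    rcases Finset.mem_union.1 hY with h | h
    · rw [Finset.mem_powersetCard]
      exact ⟨Finset.subset_univ _, ((mem𝒴 Y).1 h).1⟩
    · obtain ⟨i, -, hi⟩ := Finset.mem_image.1 h
      rw [Finset.mem_powersetCard]
      exact ⟨Finset.subset_univ _, hi ▸ hFcard i⟩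
  have himgcard : (Finset.univ.image F).card = m := by
    rw [Finset.card_image_of_injective _ hFinj, Finset.card_univ, Fintype.card_fin]
  have h𝒴le : 𝒴.card + m ≤ n.choose (e + 2) := by
    have := Finset.card_le_card hsubP
    rwa [Finset.card_union_of_disjoint hdisj𝒴, himgcard, Finset.card_powersetCard,
      Finset.card_univ, Fintype.card_fin] at this
  have h𝒲le : 𝒲.card ≤ 𝒴.card := by
    rw [h𝒲def]
    exact Finset.card_le_card (Finset.filter_subset _ _)
  have h𝒲q : 𝒲.card = S.card := by
    rw [card𝒲, hN2']
    simp
  have hch1 : n.choose (e + 1) = 4 := by rw [he0, hn4]; rfl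
  have hch2 : n.choose (e + 2) = 6 := by rw [he0, hn4]; rfl
  omega




theorem stmt_14 (n d : ℕ) (hd : 1 ≤ d) (hn : 2 * d + 2 ≤ n) :
    ¬ ∃ (m : ℕ) (F B : Fin m → Finset (Fin n)),
      Function.Injective F ∧
      (∀ i, (F i).card = d + 1) ∧
      (∀ i, B i ⊆ F i) ∧
      m = n.choose d ∧
      (∀ Y : Finset (Fin n), Y.card = d + 1 → (∀ i, Y ≠ F i) →
        ∀ Z ⊂ Y, ∃! i, F i ∩ Y = Z ∧ B i = Z) ∧
      (∀ i j, F i ∩ F j ≠ B i) := by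
  rintro ⟨m, F, B, hFinj, hFcard, hBF, hm, hserve, hint⟩
  classical
  obtain ⟨e, rfl⟩ : ∃ e, d = e + 1 := ⟨d - 1, by omega⟩
  set 𝒴 : Finset (Finset (Fin n)) :=
    (Finset.powersetCard (e + 2) (Finset.univ : Finset (Fin n))).filter
      (fun Y => ∀ i, Y ≠ F i) with h𝒴def
  have mem𝒴 : ∀ Y : Finset (Fin n), Y ∈ 𝒴 ↔ Y.card = e + 2 ∧ ∀ i, Y ≠ F i := by
    intro Y
    simp [h𝒴def, Finset.mem_powersetCard, Finset.subset_univ]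
  exact stmt_14_aux n e (by omega) m F B hFinj
    (fun i => by rw [hFcard i]) hBF hm
    (fun Y hc hnm => hserve Y (by omega) hnm) hint 𝒴 mem𝒴
end

section
/- Let Y be a (d+1)-uniform family of subsets of [n] with |∂_d Y| = (d+1)/(n−d−1) · |Y| and Y nonempty. Then |Y| ≥ C(n−1, d+1). -/
/-!
By Kruskal–Katona, `∂ 𝒴` is at least as large as the shadow of the colex initial segment
`𝒞 = initSeg s` with `#𝒞 = #𝒴`. If `#𝒴 < (n - 1).choose (d + 1)`, then no member of `𝒞` contains
the top element, so `𝒞` consists of `(d + 1)`-subsets of an `(n - 1)`-set `S`. Double counting the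
pairs `T ⊂ A` with `A ∈ 𝒞`, `T ∈ ∂ 𝒞` gives `(d + 1) #𝒞 ≤ (n - 1 - d) #(∂ 𝒞)`, since a `d`-set has
only `n - 1 - d` extensions inside `S`; the inequality is strict because `𝒞` is neither empty nor
all of `S.powersetCard (d + 1)`, so some `T ∈ ∂ 𝒞` has an extension outside `𝒞`. Hence
`(d + 1) #𝒴 < (n - 1 - d) #(∂ 𝒴)`, contradicting the hypothesis on the shadow.
-/

open Finset Colex
open scoped FinsetFamily

namespace Finset

section Shadow

variable {α : Type*} [DecidableEq α] {𝒜 : Finset (Finset α)} {S T : Finset α} {d : ℕ}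

lemma card_le_card_filter_shadow_subset {A : Finset α} (hA : A ∈ 𝒜) :
    #A ≤ #{T ∈ ∂ 𝒜 | T ⊆ A} := by
  rw [← card_image_of_injOn A.erase_injOn]
  refine card_le_card fun T hT => ?_
  obtain ⟨x, hx, rfl⟩ := mem_image.1 hT
  exact mem_filter.2 ⟨erase_mem_shadow hA hx, erase_subset x A⟩

lemma card_filter_subset_le_card_filter_insert_mem (h𝒜 : 𝒜 ⊆ S.powersetCard (d + 1))
    (hT : #T = d) : #{A ∈ 𝒜 | T ⊆ A} ≤ #{x ∈ S \ T | insert x T ∈ 𝒜} := by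
  refine (card_le_card fun A hA => ?_).trans (card_image_le (f := (insert · T)))
  obtain ⟨hA𝒜, hTA⟩ := mem_filter.1 hA
  obtain ⟨hAS, hAcard⟩ := mem_powersetCard.1 (h𝒜 hA𝒜)
  obtain ⟨x, hxT, rfl⟩ := exists_eq_insert_iff.2 ⟨hTA, by rw [hT, hAcard]⟩
  exact mem_image.2 ⟨x, mem_filter.2 ⟨mem_sdiff.2 ⟨hAS (mem_insert_self x T), hxT⟩, hA𝒜⟩, rfl⟩

theorem card_mul_lt_card_shadow_mul (h𝒜 : 𝒜 ⊆ S.powersetCard (d + 1)) (hT : T ∈ ∂ 𝒜) {a : α}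
    (ha : a ∈ S \ T) (hins : insert a T ∉ 𝒜) : (d + 1) * #𝒜 < (#S - d) * #(∂ 𝒜) := by
  have hshadow : ∀ U ∈ ∂ 𝒜, U ⊆ S ∧ #U = d := fun U hU => by
    obtain ⟨A, hA, hUA, hcard⟩ := mem_shadow_iff_exists_mem_card_add_one.1 hU
    obtain ⟨hAS, hAcard⟩ := mem_powersetCard.1 (h𝒜 hA)
    exact ⟨hUA.trans hAS, by omega⟩
  have hdeg : ∀ U ∈ ∂ 𝒜, #{A ∈ 𝒜 | U ⊆ A} ≤ #{x ∈ S \ U | insert x U ∈ 𝒜} := fun U hU =>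
    card_filter_subset_le_card_filter_insert_mem h𝒜 (hshadow U hU).2
  have hcard_sdiff : ∀ U ∈ ∂ 𝒜, #(S \ U) = #S - d := fun U hU => by
    rw [card_sdiff_of_subset (hshadow U hU).1, (hshadow U hU).2]
  calc (d + 1) * #𝒜 = ∑ A ∈ 𝒜, (d + 1) := by rw [sum_const, smul_eq_mul, mul_comm]
    _ ≤ ∑ A ∈ 𝒜, #{U ∈ ∂ 𝒜 | U ⊆ A} := sum_le_sum fun A hA =>
        (mem_powersetCard.1 (h𝒜 hA)).2 ▸ card_le_card_filter_shadow_subset hA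
    _ = ∑ U ∈ ∂ 𝒜, #{A ∈ 𝒜 | U ⊆ A} :=
        sum_card_bipartiteAbove_eq_sum_card_bipartiteBelow (fun (A U : Finset α) => U ⊆ A)
    _ < ∑ U ∈ ∂ 𝒜, (#S - d) := by
        refine sum_lt_sum (fun U hU => ?_) ⟨T, hT, ?_⟩
        · exact (hdeg U hU).trans ((card_filter_le _ _).trans (hcard_sdiff U hU).le)
        · exact (hdeg T hT).trans_lt ((card_lt_card (filter_ssubset.2 ⟨a, ha, hins⟩)).trans_eq
            (hcard_sdiff T hT))
    _ = (#S - d) * #(∂ 𝒜) := by rw [sum_const, smul_eq_mul, mul_comm]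

lemma shadow_eq_filter_exists_subset [Fintype α] (h𝒜 : (𝒜 : Set (Finset α)).Sized (d + 1)) :
    ∂ 𝒜 = {T ∈ (univ : Finset α).powersetCard d | ∃ A ∈ 𝒜, T ⊆ A} := by
  ext T
  rw [mem_filter, mem_powersetCard_univ, mem_shadow_iff_exists_mem_card_add_one]
  constructor
  · rintro ⟨A, hA, hTA, hcard⟩
    exact ⟨by have := h𝒜 hA; omega, A, hA, hTA⟩
  · rintro ⟨hT, A, hA, hTA⟩
    exact ⟨A, hA, hTA, by rw [h𝒜 hA, hT]⟩

end Shadow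

section InitSeg

variable {α : Type*} [LinearOrder α]

lemma toColex_lt_toColex_insert_erase {s : Finset α} {x a : α} (hx : x ∈ s) (ha : a ∉ s)
    (hxa : x < a) : toColex s < toColex (insert a (s.erase x)) := by
  conv_lhs => rw [← insert_erase hx]
  exact (insert_lt_insert (notMem_erase x s) fun h => ha (mem_of_mem_erase h)).2 hxa

variable [Fintype α]

theorem exists_isInitSeg_card (r : ℕ) {m : ℕ} (hm : m ≤ (Fintype.card α).choose r) :
    ∃ 𝒞 : Finset (Finset α), IsInitSeg 𝒞 r ∧ #𝒞 = m := by
  induction m with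
  | zero => exact ⟨∅, isInitSeg_empty, card_empty⟩
  | succ m ih =>
    obtain ⟨𝒞, h𝒞, rfl⟩ := ih (by omega)
    have hrest : (powersetCard r univ \ 𝒞).Nonempty := by
      rw [sdiff_nonempty]
      intro h
      have := card_le_card h
      rw [card_powersetCard, card_univ] at this
      omega
    obtain ⟨s, hs, hmin⟩ := exists_min_image _ toColex hrest
    rw [mem_sdiff, mem_powersetCard_univ] at hs
    refine ⟨insert s 𝒞, ⟨fun t ht => ?_, fun t u ht hu => ?_⟩, card_insert_of_notMem hs.2⟩
    · rcases mem_insert.1 ht with rfl | ht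
      exacts [hs.1, h𝒞.1 ht]
    · rcases mem_insert.1 ht with rfl | ht
      · by_contra hu𝒞
        have hu' : u ∈ powersetCard r univ \ 𝒞 :=
          mem_sdiff.2 ⟨mem_powersetCard_univ.2 hu.2, fun h => hu𝒞 (mem_insert_of_mem h)⟩
        exact (hmin u hu').not_gt hu.1
      · exact mem_insert_of_mem (h𝒞.2 ht hu)

variable [OrderTop α]

lemma choose_lt_card_initSeg_of_top_mem {s : Finset α} (hs : ⊤ ∈ s) :
    (Fintype.card α - 1).choose #s < #(initSeg s) := by
  have hnotMem : s ∉ (univ.erase ⊤).powersetCard #s := fun h =>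
    notMem_erase ⊤ univ ((mem_powersetCard.1 h).1 hs)
  have hsub : insert s ((univ.erase ⊤).powersetCard #s) ⊆ initSeg s := by
    refine insert_subset mem_initSeg_self fun t ht => ?_
    obtain ⟨hts, htcard⟩ := mem_powersetCard.1 ht
    refine mem_initSeg.2 ⟨htcard.symm, (toColex_lt_toColex_iff_exists_forall_lt.2
      ⟨⊤, hs, fun h => notMem_erase ⊤ univ (hts h), fun b hb _ => ?_⟩).le⟩
    exact lt_top_iff_ne_top.2 (ne_of_mem_erase (hts hb))
  calc (Fintype.card α - 1).choose #s
      < #(insert s ((univ.erase ⊤).powersetCard #s)) := by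
        rw [card_insert_of_notMem hnotMem, card_powersetCard, card_erase_of_mem (mem_univ _),
          card_univ]
        omega
    _ ≤ #(initSeg s) := card_le_card hsub

theorem card_mul_lt_card_shadow_mul_of_initSeg {s : Finset α} {d : ℕ} (hs : #s = d + 1)
    (hsmall : #(initSeg s) < (Fintype.card α - 1).choose (d + 1)) :
    (d + 1) * #(initSeg s) < (Fintype.card α - 1 - d) * #(∂ (initSeg s)) := by
  have htop : ⊤ ∉ s := fun h => (choose_lt_card_initSeg_of_top_mem h).not_gt (hs ▸ hsmall)
  have hinit : initSeg s ⊆ (univ.erase ⊤).powersetCard (d + 1) := fun t ht => by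
    obtain ⟨hcard, hts⟩ := mem_initSeg.1 ht
    have hlt := forall_lt_mono hts fun c hc => lt_top_iff_ne_top.2 (ne_of_mem_of_not_mem hc htop)
    exact mem_powersetCard.2 ⟨fun b hb => mem_erase.2 ⟨(hlt b hb).ne, mem_univ b⟩, by omega⟩
  obtain ⟨B, hB, hBs⟩ := exists_mem_notMem_of_card_lt_card (hsmall.trans_eq (by
    rw [card_powersetCard, card_erase_of_mem (mem_univ (⊤ : α)), card_univ]))
  obtain ⟨hBS, hBcard⟩ := mem_powersetCard.1 hB
  -- Swapping some `x ∈ s \ B` for the colex witness `a ∈ B \ s` gives a set above `s`,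
  -- hence outside `initSeg s`, that extends `s.erase x ∈ ∂ (initSeg s)`.
  have hsB : toColex s < toColex B := lt_of_not_ge fun h => hBs (mem_initSeg.2 ⟨by omega, h⟩)
  obtain ⟨a, haB, has, hmax⟩ := toColex_lt_toColex_iff_exists_forall_lt.1 hsB
  obtain ⟨x, hxs, hxB⟩ : ∃ x ∈ s, x ∉ B := not_subset.1 fun h =>
    has (eq_of_subset_of_card_le h (by omega) ▸ haB)
  have hswap := toColex_lt_toColex_insert_erase hxs has (hmax x hxs hxB)
  have := card_mul_lt_card_shadow_mul hinit (erase_mem_shadow mem_initSeg_self hxs)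
    (mem_sdiff.2 ⟨hBS haB, fun h => has (mem_of_mem_erase h)⟩)
    fun h => hswap.not_ge (mem_initSeg.1 h).2
  rwa [card_erase_of_mem (mem_univ (⊤ : α)), card_univ] at this

end InitSeg

end Finset

theorem stmt_16 (n d : ℕ) (𝒴 : Finset (Finset (Fin n)))
    (hunif : ∀ Y ∈ 𝒴, Y.card = d + 1)
    (hne : 𝒴.Nonempty)
    (hshadow : ((((Finset.univ : Finset (Fin n)).powersetCard d).filter
        (fun T => ∃ Y ∈ 𝒴, T ⊆ Y)).card : ℝ)
      = ((d : ℝ) + 1) / ((n : ℝ) - d - 1) * 𝒴.card) :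
    (n - 1).choose (d + 1) ≤ 𝒴.card := by
  rcases le_or_gt n (d + 1) with hn | hn
  · simp [Nat.choose_eq_zero_of_lt (show n - 1 < d + 1 by omega)]
  have : NeZero n := ⟨by omega⟩
  have hsized : (𝒴 : Set (Finset (Fin n))).Sized (d + 1) := hunif
  rw [← shadow_eq_filter_exists_subset hsized] at hshadow
  have hcount : (n - 1 - d) * #(∂ 𝒴) = (d + 1) * #𝒴 := by
    have hcast : ((n - 1 - d : ℕ) : ℝ) = n - d - 1 := by
      rw [Nat.cast_sub (by omega), Nat.cast_sub (by omega)]; ring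
    have hpos : (0 : ℝ) < n - d - 1 := by rw [← hcast]; exact_mod_cast (by omega : 0 < n - 1 - d)
    rw [div_mul_eq_mul_div, eq_div_iff hpos.ne'] at hshadow
    exact_mod_cast (show ((n - 1 - d : ℕ) : ℝ) * #(∂ 𝒴) = (d + 1) * #𝒴 by rw [hcast]; linarith)
  by_contra! hlt
  obtain ⟨𝒞, h𝒞, hcard⟩ := exists_isInitSeg_card (α := Fin n) (d + 1) (m := #𝒴)
    (hlt.le.trans (Nat.choose_le_choose _ (by simp)))
  obtain ⟨s, hs, rfl⟩ := h𝒞.exists_initSeg (card_pos.1 (hcard ▸ hne.card_pos))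
  have hstrict := card_mul_lt_card_shadow_mul_of_initSeg hs (by simpa [hcard] using hlt)
  have hkk := kruskal_katona hsized hcard.le h𝒞
  rw [hcard, Fintype.card_fin] at hstrict
  exact (hstrict.trans_le (Nat.mul_le_mul_left _ hkk)).ne hcount.symm
end

section
/- Let F ⊆ binom([n], d+1) with VC-dimension at most d, and for each F_i ∈ F fix B_i ⊆ F_i such that F ∩ F_i ≠ B_i for all F ∈ F. Define f_{F_i}(x) = ∏_{j∈B_i} x_j · ∏_{j∈F_i∖B_i}(x_j − 1) − ∏_{j∈F_i} x_j. Then f_{F_i}(v_{F_i}) = −1 and f_{F_i}(v_{F_j}) = 0 for all j ≠ i, and the polynomials {f_{F_i}} are linearly independent of degree at most d. -/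
open MvPolynomial

lemma eval_prodX {n : ℕ} (A s : Finset (Fin n)) :
    eval (charVec A) (∏ j ∈ s, X j) = if s ⊆ A then 1 else 0 := by
  rw [map_prod]
  by_cases h : s ⊆ A
  · rw [if_pos h]
    apply Finset.prod_eq_one
    intro j hj
    simp [charVec, h hj]
  · rw [if_neg h]
    obtain ⟨j, hj, hjA⟩ := Finset.not_subset.mp h
    apply Finset.prod_eq_zero hj
    simp [charVec, hjA]

lemma eval_prodX1 {n : ℕ} (A s : Finset (Fin n)) (j : Fin n) (hj : j ∈ s) (hjA : j ∈ A) :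
    eval (charVec A) (∏ i ∈ s, (X i - 1)) = 0 := by
  rw [map_prod]
  apply Finset.prod_eq_zero hj
  simp [charVec, hjA]

lemma deg_aux {n : ℕ} (s : Finset (Fin n)) :
    (∏ j ∈ s, (X j - 1) - ∏ j ∈ s, (X j : MvPolynomial (Fin n) ℝ)).totalDegree ≤ s.card - 1 := by
  induction s using Finset.induction with
  | empty => simp
  | @insert a s ha ih =>
    rw [Finset.prod_insert ha, Finset.prod_insert ha]
    have key : (X a - 1) * ∏ j ∈ s, (X j - 1) - X a * ∏ j ∈ s, (X j : MvPolynomial (Fin n) ℝ) =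
        X a * (∏ j ∈ s, (X j - 1) - ∏ j ∈ s, X j) - ∏ j ∈ s, (X j - 1) := by ring
    rw [key]
    rcases Finset.eq_empty_or_nonempty s with rfl | hs
    · simp
    · have h1 : (X a * (∏ j ∈ s, (X j - 1) - ∏ j ∈ s, (X j : MvPolynomial (Fin n) ℝ))).totalDegree
          ≤ 1 + (s.card - 1) :=
        (totalDegree_mul _ _).trans (add_le_add (totalDegree_X a).le ih)
      have h2 : (∏ j ∈ s, (X j - 1 : MvPolynomial (Fin n) ℝ)).totalDegree ≤ s.card := by
        refine (totalDegree_finset_prod _ _).trans ?_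
        calc ∑ j ∈ s, (X j - 1 : MvPolynomial (Fin n) ℝ).totalDegree
            ≤ ∑ _j ∈ s, 1 := Finset.sum_le_sum fun j _ => totalDegree_sub_C_le _ _ |>.trans
              (totalDegree_X j).le
          _ = s.card := by simp
      have hc : 1 ≤ s.card := hs.card_pos
      refine (totalDegree_sub _ _).trans ?_
      rw [Finset.card_insert_of_notMem ha]
      omega

theorem stmt_17 (n d : ℕ) (𝒜 : Finset (Finset (Fin n)))
    (hunif : ∀ F ∈ 𝒜, F.card = d + 1)
    (B : Finset (Fin n) → Finset (Fin n))
    (hB : ∀ Fi ∈ 𝒜, B Fi ⊆ Fi ∧ ∀ F ∈ 𝒜, F ∩ Fi ≠ B Fi)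
    (f : Finset (Fin n) → MvPolynomial (Fin n) ℝ)
    (hf : ∀ Fi : Finset (Fin n),
      f Fi = (∏ j ∈ B Fi, X j) * (∏ j ∈ Fi \ B Fi, (X j - 1)) - ∏ j ∈ Fi, X j) :
    (∀ Fi ∈ 𝒜, eval (charVec Fi) (f Fi) = -1) ∧
    (∀ Fi ∈ 𝒜, ∀ Fj ∈ 𝒜, Fj ≠ Fi → eval (charVec Fj) (f Fi) = 0) ∧
    (∀ Fi ∈ 𝒜, (f Fi).totalDegree ≤ d) ∧
    LinearIndependent ℝ (fun Fi : 𝒜 => f Fi.val) := by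
  have hBne : ∀ Fi ∈ 𝒜, B Fi ≠ Fi := by
    intro Fi hFi h
    exact (hB Fi hFi).2 Fi hFi (by rw [Finset.inter_self, h])
  have hdiag : ∀ Fi ∈ 𝒜, eval (charVec Fi) (f Fi) = -1 := by
    intro Fi hFi
    obtain ⟨hsub, _⟩ := hB Fi hFi
    obtain ⟨j, hj⟩ := Finset.sdiff_nonempty.mpr fun h =>
      hBne Fi hFi (Finset.Subset.antisymm hsub h)
    rw [hf, map_sub, map_mul, eval_prodX1 Fi _ j hj (Finset.mem_sdiff.mp hj).1,
      eval_prodX, eval_prodX, if_pos hsub, if_pos Finset.Subset.rfl]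
    ring
  have hoff : ∀ Fi ∈ 𝒜, ∀ Fj ∈ 𝒜, Fj ≠ Fi → eval (charVec Fj) (f Fi) = 0 := by
    intro Fi hFi Fj hFj hne
    obtain ⟨hsub, hwit⟩ := hB Fi hFi
    rw [hf, map_sub, map_mul]
    have h2 : eval (charVec Fj) (∏ j ∈ Fi, X j) = 0 := by
      rw [eval_prodX, if_neg]
      intro h
      exact hne (Finset.eq_of_subset_of_card_le h
        (by rw [hunif Fi hFi, hunif Fj hFj])).symm
    rw [h2, sub_zero]
    by_cases hBj : B Fi ⊆ Fj
    · have : ∃ j ∈ Fi \ B Fi, j ∈ Fj := by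
        by_contra hc
        push_neg at hc
        apply hwit Fj hFj
        apply Finset.Subset.antisymm
        · intro x hx
          rw [Finset.mem_inter] at hx
          by_contra hxB
          exact hc x (Finset.mem_sdiff.mpr ⟨hx.2, hxB⟩) hx.1
        · exact Finset.subset_inter hBj hsub
      obtain ⟨j, hj1, hj2⟩ := this
      rw [eval_prodX1 Fj _ j hj1 hj2, mul_zero]
    · rw [eval_prodX, if_neg hBj, zero_mul]
  have hdeg : ∀ Fi ∈ 𝒜, (f Fi).totalDegree ≤ d := by
    intro Fi hFi
    obtain ⟨hsub, _⟩ := hB Fi hFi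
    have hfi : f Fi = (∏ j ∈ B Fi, X j) *
        (∏ j ∈ Fi \ B Fi, (X j - 1) - ∏ j ∈ Fi \ B Fi, X j) := by
      rw [hf, mul_sub, ← Finset.prod_sdiff hsub]
      ring
    have hcard : (Fi \ B Fi).card = Fi.card - (B Fi).card := Finset.card_sdiff_of_subset hsub
    have hne : (Fi \ B Fi).Nonempty := Finset.sdiff_nonempty.mpr fun h =>
      hBne Fi hFi (Finset.Subset.antisymm hsub h)
    have hBcard : (B Fi).card < Fi.card := Finset.card_lt_card
      (Finset.ssubset_iff_subset_ne.mpr ⟨hsub, hBne Fi hFi⟩)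
    have h1 : (∏ j ∈ B Fi, (X j : MvPolynomial (Fin n) ℝ)).totalDegree ≤ (B Fi).card := by
      refine (totalDegree_finset_prod _ _).trans ?_
      calc ∑ j ∈ B Fi, (X j : MvPolynomial (Fin n) ℝ).totalDegree
          ≤ ∑ _j ∈ B Fi, 1 := Finset.sum_le_sum fun j _ => (totalDegree_X j).le
        _ = (B Fi).card := by simp
    rw [hfi]
    refine (totalDegree_mul _ _).trans ?_
    have := deg_aux (Fi \ B Fi)
    have hc := hunif Fi hFi
    have hp := hne.card_pos
    omega
  refine ⟨hdiag, hoff, hdeg, ?_⟩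
  rw [linearIndependent_iff']
  intro s g hsum i hi
  have := congrArg (eval (charVec i.val)) hsum
  rw [map_sum, map_zero] at this
  simp only [smul_eval] at this
  rw [Finset.sum_eq_single i] at this
  · rw [hdiag i.val i.2] at this
    linarith
  · intro j hj hji
    rw [hoff j.val j.2 i.val i.2 (fun h => hji (Subtype.ext h.symm)), mul_zero]
  · intro h; exact absurd hi h
end

section
/- Let F ⊆ binom([n], d+1) have VC-dimension at most d, with witnesses B_i ⊆ F_i (so F_j ∩ F_i ≠ B_i for all j), and suppose |F| = C(n, d). Then for every Y ∈ binom([n], d+1) ∖ F and every proper subset Z ⊊ Y, there is exactly one index i with F_i ∩ Y = Z = B_i. -/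
/-!
A multilinear polynomial on `{0,1}^α` is identified with its function on `Finset α`, so that the
monomial `x^K` is `subsetIndicator K : S ↦ [K ⊆ S]`; those of degree at most `d` span
`lowDegree d`, of dimension at most `∑_{k ≤ d} C(n, k)`. By inclusion–exclusion `S ↦ [S ∩ F = B]`
has degree `#F` with top coefficient `±1`; dropping that monomial gives
`f_F = truncatedTraceIndicator B F` of degree at most `d`. The `f_{F_i}` together with the
`h_H = vanishingIndicator d H : S ↦ [H ⊆ S] (#S - d - 1)`, `#H < d`, are linearly independent:
at `F_i` every `h_H` vanishes and so does every `f_{F_j}`, `j ≠ i`, by the witness property;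
then evaluate at the sets `H` in order of size. As there are `C(n, d) + ∑_{k < d} C(n, k)` of
them, they form a basis of `lowDegree d`. Expanding `f_{Y,Z}` in this basis and evaluating at
the `F_j` shows that the coefficient of `f_{F_j}` is `∓[F_j ∩ Y = Z]`; evaluating at `Y`, the
indices with `F_j ∩ Y = Z = B_j` contribute the same sign each and must add up to it once.
-/

open Finset Submodule

namespace VCWitness

theorem linearIndependent_of_triangular {K X ι : Type*} [Ring K] [NoZeroDivisors K]
    (v : ι → X → K) (x : ι → X) (r : ι → ℕ) (hdiag : ∀ i, v i (x i) ≠ 0)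
    (hoff : ∀ i j, j ≠ i → r i ≤ r j → v j (x i) = 0) : LinearIndependent K v := by
  classical
  rw [linearIndependent_iff']
  intro s g hg
  by_contra! hne
  obtain ⟨i, hi, hgi⟩ := hne
  obtain ⟨i₀, hi₀, hmin⟩ := (s.filter (g · ≠ 0)).exists_min_image r ⟨i, mem_filter.2 ⟨hi, hgi⟩⟩
  rw [mem_filter] at hi₀
  have hsum := congrFun hg (x i₀)
  simp only [Finset.sum_apply, Pi.smul_apply, smul_eq_mul, Pi.zero_apply] at hsum
  rw [sum_eq_single_of_mem i₀ hi₀.1 fun j hj hji₀ => ?_] at hsum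
  · exact hi₀.2 ((mul_eq_zero.1 hsum).resolve_right (hdiag i₀))
  · by_cases hgj : g j = 0
    · rw [hgj, zero_mul]
    · rw [hoff i₀ j hji₀ (hmin j (mem_filter.2 ⟨hj, hgj⟩)), mul_zero]

theorem span_range_eq_of_linearIndependent {K V ι κ : Type*} [Field K] [AddCommGroup V]
    [Module K V] [Fintype ι] [Fintype κ] {v : ι → V} {w : κ → V} (hv : LinearIndependent K v)
    (hvw : ∀ i, v i ∈ span K (Set.range w)) (hcard : Fintype.card κ ≤ Fintype.card ι) :
    span K (Set.range v) = span K (Set.range w) :=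
  have := FiniteDimensional.span_of_finite K (Set.finite_range w)
  eq_of_le_of_finrank_le (span_le.2 (Set.range_subset_iff.2 hvw))
    ((finrank_range_le_card w).trans (hcard.trans (finrank_span_eq_card hv).ge))

section Indicators

variable {α : Type*} [DecidableEq α]

def subsetIndicator (K S : Finset α) : ℚ := if K ⊆ S then 1 else 0

def traceIndicator (B F S : Finset α) : ℚ := if S ∩ F = B then 1 else 0

def truncatedTraceIndicator (B F : Finset α) : Finset α → ℚ :=
  traceIndicator B F - (-1 : ℚ) ^ #(F \ B) • subsetIndicator F

def vanishingIndicator (d : ℕ) (H S : Finset α) : ℚ := subsetIndicator H S * (#S - (d + 1))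

def lowDegree (d : ℕ) : Submodule ℚ (Finset α → ℚ) :=
  span ℚ (Set.range fun K : {K : Finset α // #K ≤ d} => subsetIndicator K.1)

theorem sum_powerset_neg_one_pow_mul_subsetIndicator (M S : Finset α) :
    ∑ R ∈ M.powerset, (-1 : ℚ) ^ #R * subsetIndicator R S = if Disjoint M S then 1 else 0 := by
  have hfilter : M.powerset.filter (· ⊆ S) = (M ∩ S).powerset := by
    ext R; simp only [mem_filter, mem_powerset, subset_inter_iff]
  simp only [subsetIndicator, mul_ite, mul_one, mul_zero]
  rw [← sum_filter, hfilter]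
  simp only [disjoint_iff_inter_eq_empty]
  exact_mod_cast sum_powerset_neg_one_pow_card

theorem traceIndicator_eq_sum {B F : Finset α} (hBF : B ⊆ F) :
    traceIndicator B F = ∑ R ∈ (F \ B).powerset, (-1 : ℚ) ^ #R • subsetIndicator (B ∪ R) := by
  ext S
  simp only [Finset.sum_apply, Pi.smul_apply, smul_eq_mul]
  by_cases hBS : B ⊆ S
  · have hunion (R : Finset α) : subsetIndicator (B ∪ R) S = subsetIndicator R S := by
      simp only [subsetIndicator, union_subset_iff, hBS, true_and]
    have htrace : S ∩ F = B ↔ Disjoint (F \ B) S := by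
      simp only [Finset.ext_iff, disjoint_left, mem_inter, mem_sdiff]
      grind
    simp only [hunion, sum_powerset_neg_one_pow_mul_subsetIndicator, traceIndicator, htrace]
  · have htrace : S ∩ F ≠ B := fun h => hBS (h ▸ inter_subset_left)
    have hunion (R : Finset α) : subsetIndicator (B ∪ R) S = 0 :=
      if_neg fun h => hBS (subset_union_left.trans h)
    simp only [traceIndicator, htrace, hunion, mul_zero, sum_const_zero, if_false]

theorem truncatedTraceIndicator_mem_lowDegree {d : ℕ} {B F : Finset α} (hBF : B ⊆ F)
    (hF : #F ≤ d + 1) : truncatedTraceIndicator B F ∈ lowDegree d := by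
  have hsum : truncatedTraceIndicator B F =
      ∑ R ∈ (F \ B).powerset.erase (F \ B), (-1 : ℚ) ^ #R • subsetIndicator (B ∪ R) := by
    rw [truncatedTraceIndicator, traceIndicator_eq_sum hBF,
      ← add_sum_erase _ _ (mem_powerset_self _), union_sdiff_of_subset hBF, add_sub_cancel_left]
  rw [hsum]
  refine sum_mem fun R hR => smul_mem _ _ (subset_span ⟨⟨B ∪ R, ?_⟩, rfl⟩)
  obtain ⟨hRne, hRsub⟩ := mem_erase.1 hR
  have hR : #R < #(F \ B) := card_lt_card ((mem_powerset.1 hRsub).ssubset_of_ne hRne)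
  have := card_union_le B R
  have := card_sdiff_of_subset hBF
  have := card_le_card hBF
  omega

theorem vanishingIndicator_eq_sum [Fintype α] (d : ℕ) (H : Finset α) :
    vanishingIndicator d H =
      ∑ x, subsetIndicator (insert x H) - ((d : ℚ) + 1) • subsetIndicator H := by
  ext S
  simp only [vanishingIndicator, Pi.sub_apply, Finset.sum_apply, Pi.smul_apply, smul_eq_mul]
  by_cases hHS : H ⊆ S
  · simp [subsetIndicator, insert_subset_iff, hHS]
  · have hinsert (x : α) : subsetIndicator (insert x H) S = 0 :=
      if_neg fun h => hHS ((subset_insert x H).trans h)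
    simp [hinsert, show subsetIndicator H S = 0 from if_neg hHS]

theorem vanishingIndicator_mem_lowDegree [Fintype α] {d : ℕ} {H : Finset α} (hH : #H < d) :
    vanishingIndicator d H ∈ lowDegree d := by
  rw [vanishingIndicator_eq_sum]
  refine sub_mem (sum_mem fun x _ => subset_span ⟨⟨insert x H, ?_⟩, rfl⟩)
    (smul_mem _ _ (subset_span ⟨⟨H, hH.le⟩, rfl⟩))
  exact (card_insert_le x H).trans hH

theorem truncatedTraceIndicator_apply_of_not_subset {B F S : Finset α} (h : ¬F ⊆ S) :
    truncatedTraceIndicator B F S = traceIndicator B F S := by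
  simp [truncatedTraceIndicator, subsetIndicator, h]

theorem truncatedTraceIndicator_apply_self {B F : Finset α} (h : F ≠ B) :
    truncatedTraceIndicator B F F = -(-1) ^ #(F \ B) := by
  simp [truncatedTraceIndicator, traceIndicator, subsetIndicator, h]

theorem vanishingIndicator_apply_of_card_eq {d : ℕ} {H S : Finset α} (hS : #S = d + 1) :
    vanishingIndicator d H S = 0 := by
  simp [vanishingIndicator, hS]

theorem vanishingIndicator_apply_self_ne_zero {d : ℕ} {H : Finset α} (hH : #H ≠ d + 1) :
    vanishingIndicator d H H ≠ 0 := by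
  simp only [vanishingIndicator, subsetIndicator, subset_refl, if_true, one_mul, sub_ne_zero]
  exact_mod_cast hH

theorem vanishingIndicator_apply_of_not_subset {d : ℕ} {H S : Finset α} (h : ¬H ⊆ S) :
    vanishingIndicator d H S = 0 := by
  simp [vanishingIndicator, subsetIndicator, h]

end Indicators

section Family

variable {α ι : Type*} [DecidableEq α] {d : ℕ} {F B : ι → Finset α}

def witnessFamily (d : ℕ) (F B : ι → Finset α) :
    ι ⊕ {H : Finset α // #H < d} → Finset α → ℚ :=
  Sum.elim (fun i => truncatedTraceIndicator (B i) (F i)) fun H => vanishingIndicator d H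

theorem truncatedTraceIndicator_apply_family [DecidableEq ι] (hinj : F.Injective)
    (hunif : ∀ i, #(F i) = d + 1) (hwit : ∀ i j, F j ∩ F i ≠ B i) (i j : ι) :
    truncatedTraceIndicator (B j) (F j) (F i) = if j = i then -(-1) ^ #(F i \ B i) else 0 := by
  split_ifs with hji
  · subst hji
    exact truncatedTraceIndicator_apply_self (by simpa using hwit j j)
  · have hFji : ¬F j ⊆ F i := fun h =>
      hji (hinj (eq_of_subset_of_card_le h (by rw [hunif, hunif])))
    rw [truncatedTraceIndicator_apply_of_not_subset hFji]
    exact if_neg (hwit j i)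

theorem linearIndependent_witnessFamily (hinj : F.Injective) (hunif : ∀ i, #(F i) = d + 1)
    (hwit : ∀ i j, F j ∩ F i ≠ B i) : LinearIndependent ℚ (witnessFamily d F B) := by
  classical
  refine linearIndependent_of_triangular _ (Sum.elim F Subtype.val)
    (Sum.elim (fun _ => 0) fun H => #H.1 + 1) ?_ ?_
  · rintro (i | H)
    · simp [witnessFamily, truncatedTraceIndicator_apply_family hinj hunif hwit]
    · exact vanishingIndicator_apply_self_ne_zero (by have := H.2; omega)
  · rintro (i | H) (j | H') hne hr
    · simpa [witnessFamily, truncatedTraceIndicator_apply_family hinj hunif hwit] using hne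
    · exact vanishingIndicator_apply_of_card_eq (hunif i)
    · simp at hr
    · refine vanishingIndicator_apply_of_not_subset fun h => hne ?_
      exact congrArg Sum.inr (Subtype.ext (eq_of_subset_of_card_le h (by simpa using hr)))

theorem span_witnessFamily [Fintype α] [Fintype ι] (hinj : F.Injective)
    (hunif : ∀ i, #(F i) = d + 1) (hBF : ∀ i, B i ⊆ F i) (hwit : ∀ i j, F j ∩ F i ≠ B i)
    (hcard : Fintype.card ι = (Fintype.card α).choose d) :
    span ℚ (Set.range (witnessFamily d F B)) = lowDegree d := by
  refine span_range_eq_of_linearIndependent (linearIndependent_witnessFamily hinj hunif hwit)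
    ?_ ?_
  · rintro (i | H)
    · exact truncatedTraceIndicator_mem_lowDegree (hBF i) (hunif i).le
    · exact vanishingIndicator_mem_lowDegree H.2
  · have hsplit : Fintype.card {K : Finset α // #K ≤ d} =
        Fintype.card {K : Finset α // #K < d} + Fintype.card {K : Finset α // #K = d} := by
      rw [← Fintype.card_subtype_or_disjoint _ _ fun p hlt heq K hK => by
        have := hlt K hK; have := heq K hK; simp_all]
      exact Fintype.card_congr (Equiv.subtypeEquivRight fun K => le_iff_lt_or_eq)
    rw [hsplit, Fintype.card_finset_len, Fintype.card_sum, hcard, add_comm]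

theorem sum_witnessFamily_apply_of_card_eq [Fintype α] [Fintype ι]
    (c : ι ⊕ {H : Finset α // #H < d} → ℚ) {S : Finset α} (hS : #S = d + 1) :
    ∑ k, c k * witnessFamily d F B k S =
      ∑ i, c (.inl i) * truncatedTraceIndicator (B i) (F i) S := by
  simp [Fintype.sum_sum_type, witnessFamily, vanishingIndicator_apply_of_card_eq hS]

theorem card_filter_trace_eq_witness_eq_one [Fintype α] [Fintype ι] (hinj : F.Injective)
    (hunif : ∀ i, #(F i) = d + 1) (hwit : ∀ i j, F j ∩ F i ≠ B i) {Y Z : Finset α}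
    (hY : #Y = d + 1) (hYF : ∀ i, Y ≠ F i) (hZY : Z ⊂ Y)
    {c : ι ⊕ {H : Finset α // #H < d} → ℚ}
    (hc : ∑ k, c k • witnessFamily d F B k = truncatedTraceIndicator Z Y) :
    #{i | F i ∩ Y = Z ∧ B i = Z} = 1 := by
  classical
  have heval (S : Finset α) (hS : #S = d + 1) :
      ∑ i, c (.inl i) * truncatedTraceIndicator (B i) (F i) S = truncatedTraceIndicator Z Y S := by
    rw [← sum_witnessFamily_apply_of_card_eq c hS, ← congrFun hc S]
    simp [Finset.sum_apply]
  have hY_not_subset (i : ι) : ¬Y ⊆ F i := fun h =>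
    hYF i (eq_of_subset_of_card_le h (by rw [hY, hunif]))
  have hF_not_subset (i : ι) : ¬F i ⊆ Y := fun h =>
    hYF i (eq_of_subset_of_card_le h (by rw [hY, hunif])).symm
  have hcoeff (j : ι) : c (.inl j) * -(-1) ^ #(F j \ B j) = if F j ∩ Y = Z then 1 else 0 := by
    have := heval (F j) (hunif j)
    simpa [truncatedTraceIndicator_apply_family hinj hunif hwit,
      truncatedTraceIndicator_apply_of_not_subset (hY_not_subset j), traceIndicator] using this
  have hterm (i : ι) : c (.inl i) * traceIndicator (B i) (F i) Y =
      if F i ∩ Y = Z ∧ B i = Z then -(-1) ^ #(Y \ Z) else 0 := by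
    by_cases hFYZ : F i ∩ Y = Z
    · by_cases hBZ : B i = Z
      · have hsdiff : #(F i \ B i) = #(Y \ Z) := by
          rw [hBZ, card_sdiff_of_subset (hFYZ ▸ inter_subset_left), card_sdiff_of_subset hZY.subset,
            hunif, hY]
        have hci := hcoeff i
        rw [if_pos hFYZ, hsdiff] at hci
        rw [if_pos ⟨hFYZ, hBZ⟩, traceIndicator, if_pos (by rw [inter_comm, hFYZ, hBZ]), mul_one]
        rcases neg_one_pow_eq_or ℚ #(Y \ Z) with h | h <;> rw [h] at hci ⊢ <;> linarith
      · rw [traceIndicator, if_neg (by rw [inter_comm, hFYZ]; exact Ne.symm hBZ), if_neg (by tauto),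
          mul_zero]
    · have hci := hcoeff i
      rw [if_neg hFYZ, mul_eq_zero, neg_eq_zero] at hci
      rw [hci.resolve_right (pow_ne_zero _ (by norm_num)), zero_mul, if_neg (by tauto)]
  have hsum := heval Y hY
  simp only [truncatedTraceIndicator_apply_of_not_subset (hF_not_subset _), hterm,
    truncatedTraceIndicator_apply_self hZY.ne'] at hsum
  rw [← sum_filter, sum_const, nsmul_eq_mul] at hsum
  have hsign : -(-1 : ℚ) ^ #(Y \ Z) ≠ 0 := neg_ne_zero.2 (pow_ne_zero _ (by norm_num))
  exact_mod_cast mul_right_cancel₀ hsign (hsum.trans (one_mul _).symm)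

end Family

end VCWitness

open VCWitness in
theorem stmt_19_general (n d m : ℕ)
    (F B : Fin m → Finset (Fin n))
    (hinj : Function.Injective F)
    (hunif : ∀ i, (F i).card = d + 1)
    (hBF : ∀ i, B i ⊆ F i)
    (hwit : ∀ i j, F j ∩ F i ≠ B i)
    (hcard : m = n.choose d) :
    ∀ Y : Finset (Fin n), Y.card = d + 1 → (∀ i, Y ≠ F i) →
      ∀ Z ⊂ Y, ∃! i, F i ∩ Y = Z ∧ B i = Z := by
  intro Y hY hYF Z hZY
  have hspan := span_witnessFamily hinj hunif hBF hwit (by simpa using hcard)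
  have hmem := truncatedTraceIndicator_mem_lowDegree hZY.subset hY.le
  rw [← hspan, mem_span_range_iff_exists_fun] at hmem
  obtain ⟨c, hc⟩ := hmem
  rw [Fintype.existsUnique_iff_card_one]
  exact card_filter_trace_eq_witness_eq_one hinj hunif hwit hY hYF hZY hc

theorem stmt_19 (n d m : ℕ) (hd : 1 ≤ d) (hn : d + 1 ≤ n)
    (F B : Fin m → Finset (Fin n))
    (hinj : Function.Injective F)
    (hunif : ∀ i, (F i).card = d + 1)
    (hBF : ∀ i, B i ⊆ F i)
    (hwit : ∀ i j, F j ∩ F i ≠ B i)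
    (hcard : m = n.choose d) :
    ∀ Y : Finset (Fin n), Y.card = d + 1 → (∀ i, Y ≠ F i) →
      ∀ Z ⊂ Y, ∃! i, F i ∩ Y = Z ∧ B i = Z :=
  stmt_19_general n d m F B hinj hunif hBF hwit hcard
end
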